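/- arXiv:1905.05100 — 7 statements merged into one kernel-verified Lean document; each statement's English description precedes it below -/
import Mathlib

section
/- For every colouring of the k-sets of ℕ with r colours and every j with 1 ≤ j ≤ k−1, there exists a j-clique-chain with respect to that colouring. -/
/-- `edgeColours k φ w f` is the multi-colouring `φ_{w,j}`: the set of colours
of `k`-edges containing `{w} ∪ f`. -/
def edgeColours (k : ℕ) {r : ℕ} (φ : Finset ℕ → Fin r) (w : ℕ)
    (f : Finset ℕ) : Set (Fin r) :=
  {c | ∃ e : Finset ℕ, e.card = k ∧ insert w f ⊆ e ∧ φ e = c}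

/-- A `j`-clique-chain w.r.t. the colouring `φ` of the `k`-sets of `ℕ`:
a decreasing sequence of infinite vertex sets `V 0 ⊇ V 1 ⊇ ⋯` such that for
each `i` all `j`-subsets of `V i` avoiding `i` have a common colour in the
multi-colouring `φ_{i,j}`. -/
def IsCliqueChain (k j : ℕ) {r : ℕ} (φ : Finset ℕ → Fin r)
    (V : ℕ → Set ℕ) : Prop :=
  (∀ i : ℕ, (V i).Infinite) ∧ (∀ i : ℕ, V (i + 1) ⊆ V i) ∧
  ∀ i : ℕ, ∃ c : Fin r, ∀ f : Finset ℕ, f.card = j → ↑f ⊆ V i \ {i} →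
    c ∈ edgeColours k φ i f

/-- Infinite Ramsey theorem for `n`-uniform hypergraphs on `ℕ` with colours in a
finite type: every infinite set contains an infinite monochromatic subset. -/
theorem infinite_hypergraph_ramsey {α : Type} [Finite α] :
    ∀ (n : ℕ) (C : Finset ℕ → α) (S : Set ℕ), S.Infinite →
      ∃ T, T ⊆ S ∧ T.Infinite ∧ ∃ c, ∀ f : Finset ℕ, f.card = n → ↑f ⊆ T → C f = c := by
  intro n
  induction n with
  | zero =>
    intro C S hS
    exact ⟨S, subset_rfl, hS, C ∅, fun f hf _ => by rw [Finset.card_eq_zero.mp hf]⟩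
  | succ n ih =>
    intro C S hS
    -- one step of the construction
    have step : ∀ P : {S : Set ℕ // S.Infinite},
        ∃ q : ℕ × α × {S : Set ℕ // S.Infinite},
          q.1 ∈ P.1 ∧ q.2.2.1 ⊆ P.1 ∧ (∀ x ∈ q.2.2.1, q.1 < x) ∧
          ∀ f : Finset ℕ, f.card = n → ↑f ⊆ q.2.2.1 → C (insert q.1 f) = q.2.1 := by
      rintro ⟨S, hS⟩
      obtain ⟨a, haS⟩ := hS.nonempty
      have hS' : (S \ Set.Iic a).Infinite := hS.diff (Set.finite_Iic a)
      obtain ⟨T, hTsub, hTinf, c, hc⟩ := ih (fun f => C (insert a f)) _ hS'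
      refine ⟨⟨a, c, ⟨T, hTinf⟩⟩, haS, fun x hx => (hTsub hx).1, fun x hx => ?_, hc⟩
      exact lt_of_not_ge (hTsub hx).2
    choose F hmem hsub hlt hmono using step
    set G : {S : Set ℕ // S.Infinite} → {S : Set ℕ // S.Infinite} :=
      fun P => (F P).2.2 with hG
    set input : ℕ → {S : Set ℕ // S.Infinite} := fun i => G^[i] ⟨S, hS⟩ with hinput
    have hin0 : input 0 = ⟨S, hS⟩ := rfl
    have hins : ∀ i, input (i + 1) = (F (input i)).2.2 := by
      intro i
      simp only [hinput, Function.iterate_succ_apply', hG]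
    set a : ℕ → ℕ := fun i => (F (input i)).1 with ha
    set cc : ℕ → α := fun i => (F (input i)).2.1 with hcc
    -- nested inputs
    have chain : ∀ i m, i ≤ m → (input m).1 ⊆ (input i).1 := by
      intro i m him
      induction m with
      | zero => simp_all
      | succ m ihm =>
        rcases Nat.lt_or_ge i (m + 1) with h | h
        · refine subset_trans ?_ (ihm (Nat.lt_succ_iff.mp h))
          rw [hins m]
          exact hsub (input m)
        · have : i = m + 1 := le_antisymm him h
          subst this; exact subset_rfl
    have aIn : ∀ i m, i < m → a m ∈ (input (i + 1)).1 := by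
      intro i m him
      have h1 : a m ∈ (input m).1 := hmem (input m)
      exact chain (i + 1) m him h1
    have amono : StrictMono a := by
      intro i m him
      have h1 : a m ∈ (input (i + 1)).1 := aIn i m him
      rw [hins i] at h1
      exact hlt (input i) _ h1
    have aS : ∀ i, a i ∈ S := by
      intro i
      have h1 : a i ∈ (input i).1 := hmem (input i)
      have := chain 0 i (Nat.zero_le i) h1
      rwa [hin0] at this
    -- pigeonhole on the colours
    obtain ⟨c₀, hc₀⟩ := Finite.exists_infinite_fiber cc
    have hI : (cc ⁻¹' {c₀}).Infinite := Set.infinite_coe_iff.mp hc₀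
    refine ⟨a '' (cc ⁻¹' {c₀}), ?_, hI.image amono.injective.injOn, c₀, ?_⟩
    · rintro x ⟨i, _, rfl⟩; exact aS i
    · intro f hfcard hfsub
      have hfne : f.Nonempty := Finset.card_pos.mp (by omega)
      set m := f.min' hfne with hm
      have hmf : m ∈ f := f.min'_mem hfne
      obtain ⟨i, hiI, hia⟩ := hfsub hmf
      have herase : ↑(f.erase m) ⊆ (input (i + 1)).1 := by
        intro x hx
        have hxf : x ∈ f := Finset.mem_of_mem_erase hx
        have hxm : x ≠ m := Finset.ne_of_mem_erase hx
        obtain ⟨i', hi'I, hi'a⟩ := hfsub hxf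
        have hlt' : m < x := lt_of_le_of_ne (f.min'_le x hxf) (Ne.symm hxm)
        have : i < i' := by
          rw [← hia, ← hi'a] at hlt'
          exact amono.lt_iff_lt.mp hlt'
        rw [← hi'a]
        exact aIn i i' this
      have hcardE : (f.erase m).card = n := by
        rw [Finset.card_erase_of_mem hmf, hfcard]; omega
      have := hmono (input i) (f.erase m) hcardE (by rwa [hins i] at herase)
      rw [← hia, Finset.insert_erase (by rwa [← hia] at hmf)] at this
      rw [this]
      exact hiI

/-- For every `r`-colouring of the `k`-sets of `ℕ` and every `1 ≤ j ≤ k-1`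
there exists a `j`-clique-chain. -/
theorem clique_chain_exists (r k j : ℕ) (hj : 1 ≤ j) (hjk : j < k)
    (φ : Finset ℕ → Fin r) :
    ∃ V : ℕ → Set ℕ, IsCliqueChain k j φ V := by
  rcases Nat.eq_zero_or_pos r with hr | hr
  · subst hr; exact (φ ∅).elim0
  have key : ∀ (i : ℕ) (P : {S : Set ℕ // S.Infinite}),
      ∃ T : {S : Set ℕ // S.Infinite}, T.1 ⊆ P.1 ∧
        ∃ E, ∀ f : Finset ℕ, f.card = j → ↑f ⊆ T.1 → edgeColours k φ i f = E := by
    intro i P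
    obtain ⟨T, h1, h2, E, hE⟩ :=
      infinite_hypergraph_ramsey j (edgeColours k φ i) P.1 P.2
    exact ⟨⟨T, h2⟩, h1, E, hE⟩
  choose F hFsub E hF using key
  set W : ℕ → {S : Set ℕ // S.Infinite} := fun i =>
    Nat.rec (F 0 ⟨Set.univ, Set.infinite_univ⟩) (fun n p => F (n + 1) p) i with hWdef
  have hW0 : W 0 = F 0 ⟨Set.univ, Set.infinite_univ⟩ := rfl
  have hWs : ∀ i, W (i + 1) = F (i + 1) (W i) := fun i => rfl
  have mono : ∀ i, ∀ f : Finset ℕ, f.card = j → ↑f ⊆ (W i).1 →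
      edgeColours k φ i f = (match i with
        | 0 => E 0 ⟨Set.univ, Set.infinite_univ⟩
        | n + 1 => E (n + 1) (W n)) := by
    intro i
    cases i with
    | zero => exact hF 0 ⟨Set.univ, Set.infinite_univ⟩
    | succ n => exact hF (n + 1) (W n)
  refine ⟨fun i => (W i).1, fun i => (W i).2, fun i => ?_, fun i => ?_⟩
  · show (W (i + 1)).1 ⊆ (W i).1
    rw [hWs i]; exact hFsub (i + 1) (W i)
  · -- find a canonical j-set f₀ in (W i).1 \ {i} and a colour in its edgeColours
    have hdiff : ((W i).1 \ {i}).Infinite := (W i).2.diff (Set.finite_singleton i)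
    obtain ⟨f₀, hf₀sub, hf₀card⟩ := hdiff.exists_subset_card_eq j
    have hcard : (insert i f₀).card ≤ k := by
      calc (insert i f₀).card ≤ f₀.card + 1 := Finset.card_insert_le i f₀
        _ ≤ k := by omega
    obtain ⟨e, hesub, hecard⟩ := Infinite.exists_superset_card_eq (insert i f₀) k hcard
    have hc₀ : φ e ∈ edgeColours k φ i f₀ := ⟨e, hecard, hesub, rfl⟩
    refine ⟨φ e, fun f hfcard hfsub => ?_⟩
    have h1 := mono i f hfcard (hfsub.trans Set.diff_subset)
    have h2 := mono i f₀ hf₀card (hf₀sub.trans Set.diff_subset)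
    rw [h1, ← h2]
    exact hc₀
end

section
/- For all k ≥ 2 and every (k−1)-edge-colouring of the complete k-uniform hypergraph on ℕ, there is a single monochromatic Berge-path (finite or infinite) whose core is all of ℕ; in particular ℕ admits a monochromatic Hamiltonian Berge-path. -/
/-!
By Ramsey's theorem some infinite `M` has all its `k`-subsets of one colour `c`. More generally
consider a cone: a finite apex `Y` and an infinite base `M` such that every `k`-set made of `Y`
and points of `M` has colour `c`. If some vertex `x` lies in `c`-edges with only boundedly many
points of `M`, then `x` blocks the colour `c` for every smaller base; we add `x` to the apex and
use Ramsey's theorem again to pass to a monochromatic cone below it. Blocked colours stay blocked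
and the colour of a cone is never blocked, so with `k - 1` colours this stops while the apex has
at most `k - 2` vertices. In the final colour every vertex lies in edges with arbitrarily large
points of the base, and any two base points are joined through a third by two distinct edges.
These two properties let a finite Berge-path whose last vertex is in the base swallow any given
vertex and end in the base again; iterating, every vertex is eventually covered.
-/

open Filter Function

theorem Ultrafilter.exists_preimage_singleton_mem {α β : Type*} [Finite β] (U : Ultrafilter α)
    (f : α → β) : ∃ b, f ⁻¹' {b} ∈ U := by
  obtain ⟨b, hb⟩ := (U.map f).eq_pure_of_finite
  exact ⟨b, by rw [← Ultrafilter.mem_map, hb]; rfl⟩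

theorem Nat.exists_strictMono_forall_mem {D : Finset ℕ → Set ℕ} (hD : ∀ F, (D F).Infinite) :
    ∃ a : ℕ → ℕ, StrictMono a ∧ ∀ i, a i ∈ D ((Finset.range i).image a) := by
  choose pick pick_mem pick_gt using fun F => (hD F).exists_gt (F.sup id)
  let P : ℕ → Finset ℕ := fun i => Nat.rec ∅ (fun _ F => insert (pick F) F) i
  have hP : ∀ i, P i = (Finset.range i).image (fun j => pick (P j)) := by
    intro i
    induction i with
    | zero => rfl
    | succ i ih =>
      rw [Finset.range_add_one, Finset.image_insert, ← ih]
  refine ⟨fun i => pick (P i), strictMono_nat_of_lt_succ fun i => ?_, fun i => hP i ▸ pick_mem _⟩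
  have hmem : pick (P i) ∈ P (i + 1) := Finset.mem_insert_self _ _
  exact (Finset.le_sup (f := id) hmem).trans_lt (pick_gt _)

section Ramsey

variable {β : Type*} [Finite β]

/-- `limColour U f m A` is the colour that `f` gives to `A ∪ {y₁, …, yₘ}` in the iterated
`U`-limit `yₘ → U, …, y₁ → U`. -/
noncomputable def limColour (U : Ultrafilter ℕ) (f : Finset ℕ → β) : ℕ → Finset ℕ → β
  | 0 => f
  | m + 1 => fun A =>
    (U.exists_preimage_singleton_mem fun y => limColour U f m (insert y A)).choose

theorem limColour_insert_eventually_eq (U : Ultrafilter ℕ) (f : Finset ℕ → β) (m : ℕ)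
    (A : Finset ℕ) : ∀ᶠ y in U, limColour U f m (insert y A) = limColour U f (m + 1) A :=
  (U.exists_preimage_singleton_mem fun y => limColour U f m (insert y A)).choose_spec

/-- The infinite Ramsey theorem for `n`-sets. -/
theorem exists_infinite_subset_forall_card_eq (n : ℕ) (f : Finset ℕ → β) {S : Set ℕ}
    (hS : S.Infinite) :
    ∃ c, ∃ T ⊆ S, T.Infinite ∧ ∀ C : Finset ℕ, ↑C ⊆ T → C.card = n → f C = c := by
  have := hS.cofinite_inf_principal_neBot
  set U := Ultrafilter.of (cofinite ⊓ 𝓟 S)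
  set L := limColour U f
  let D : Finset ℕ → Set ℕ := fun F =>
    {y | y ∈ S ∧ ∀ A ∈ F.powerset, A.card < n → L (n - A.card - 1) (insert y A) = L (n - A.card) A}
  have hD : ∀ F, (D F).Infinite := by
    intro F
    have hDU : D F ∈ U := by
      refine Filter.Eventually.and (Ultrafilter.of_le _ (mem_inf_of_right (mem_principal_self S)))
        ((eventually_all_finset _).2 fun A _ => ?_)
      filter_upwards [limColour_insert_eventually_eq U f (n - A.card - 1) A] with y hy hA
      rwa [Nat.sub_add_cancel (by omega)] at hy
    exact frequently_cofinite_iff_infinite.1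
      ((Ultrafilter.frequently_iff_eventually.2 hDU).filter_mono
        ((Ultrafilter.of_le _).trans inf_le_left))
  obtain ⟨a, ha_mono, haD⟩ := Nat.exists_strictMono_forall_mem hD
  have hstable : ∀ C : Finset ℕ, ↑C ⊆ Set.range a → C.card ≤ n → L (n - C.card) C = L n ∅ := by
    intro C
    induction C using Finset.induction_on_max with
    | empty => simp
    | insert x C hlt ih =>
      intro hCa hcard
      obtain ⟨i, rfl⟩ := hCa (Finset.mem_insert_self _ _)
      have hxC : a i ∉ C := fun h => (hlt _ h).false
      rw [Finset.card_insert_of_notMem hxC] at hcard ⊢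
      have hCi : C ∈ ((Finset.range i).image a).powerset := by
        refine Finset.mem_powerset.2 fun y hy => ?_
        obtain ⟨j, rfl⟩ := hCa (Finset.mem_insert_of_mem hy)
        exact Finset.mem_image_of_mem a (Finset.mem_range.2 (ha_mono.lt_iff_lt.1 (hlt _ hy)))
      rw [← Nat.sub_sub, (haD i).2 C hCi (by omega)]
      exact ih ((Finset.coe_subset.2 (Finset.subset_insert _ _)).trans hCa) (by omega)
  refine ⟨L n ∅, Set.range a, Set.range_subset_iff.2 fun i => (haD i).1,
    Set.infinite_range_of_injective ha_mono.injective, fun C hC hcard => ?_⟩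
  simpa [hcard, L, limColour] using hstable C hC hcard.le

end Ramsey

def Reaches (H : Set (Finset ℕ)) (M : Set ℕ) (x : ℕ) : Prop :=
  ∀ n, ∃ E ∈ H, x ∈ E ∧ ∃ m ∈ E, m ∈ M ∧ n < m

def Joinable (H : Set (Finset ℕ)) (M : Set ℕ) : Prop :=
  ∀ u ∈ M, ∀ v ∈ M, u ≠ v → ∀ n, ∃ w, n < w ∧
    ∃ F₁ ∈ H, ∃ F₂ ∈ H, F₁ ≠ F₂ ∧ u ∈ F₁ ∧ w ∈ F₁ ∧ w ∈ F₂ ∧ v ∈ F₂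

theorem Reaches.mono {H : Set (Finset ℕ)} {M M' : Set ℕ} {x : ℕ} (h : Reaches H M x)
    (hM : M ⊆ M') : Reaches H M' x := fun n => by
  obtain ⟨E, hEH, hxE, m, hmE, hmM, hnm⟩ := h n
  exact ⟨E, hEH, hxE, m, hmE, hM hmM, hnm⟩

/-- A finite Berge-path with vertices `v 0, …, v len` and edges `e 0, …, e (len - 1)`. -/
structure BergePrefix (H : Set (Finset ℕ)) where
  len : ℕ
  v : ℕ → ℕ
  e : ℕ → Finset ℕ
  injOn_v : Set.InjOn v (Set.Iic len)
  injOn_e : Set.InjOn e (Set.Iio len)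
  isBerge : ∀ i < len, e i ∈ H ∧ v i ∈ e i ∧ v (i + 1) ∈ e i

namespace BergePrefix

variable {H : Set (Finset ℕ)}

def verts (p : BergePrefix H) : Set ℕ := p.v '' Set.Iic p.len

def edges (p : BergePrefix H) : Set (Finset ℕ) := p.e '' Set.Iio p.len

def last (p : BergePrefix H) : ℕ := p.v p.len

instance : Preorder (BergePrefix H) where
  le p q := p.len ≤ q.len ∧ Set.EqOn p.v q.v (Set.Iic p.len) ∧ Set.EqOn p.e q.e (Set.Iio p.len)
  le_refl p := ⟨le_rfl, Set.eqOn_refl _ _, Set.eqOn_refl _ _⟩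
  le_trans p q r hpq hqr :=
    ⟨hpq.1.trans hqr.1,
      hpq.2.1.trans (hqr.2.1.mono (Set.Iic_subset_Iic.2 hpq.1)),
      hpq.2.2.trans (hqr.2.2.mono (Set.Iio_subset_Iio hpq.1))⟩

theorem v_eq_of_le {p q : BergePrefix H} (h : p ≤ q) {i : ℕ} (hi : i ≤ p.len) :
    q.v i = p.v i := (h.2.1 (Set.mem_Iic.2 hi)).symm

theorem e_eq_of_le {p q : BergePrefix H} (h : p ≤ q) {i : ℕ} (hi : i < p.len) :
    q.e i = p.e i := (h.2.2 (Set.mem_Iio.2 hi)).symm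

theorem verts_mono {p q : BergePrefix H} (h : p ≤ q) : p.verts ⊆ q.verts := by
  rintro _ ⟨i, hi, rfl⟩
  exact ⟨i, Set.Iic_subset_Iic.2 h.1 hi, v_eq_of_le h hi⟩

theorem exists_bound (p : BergePrefix H) :
    ∃ b, (∀ x ∈ p.verts, x ≤ b) ∧ ∀ E ∈ p.edges, ∀ z ∈ E, z ≤ b := by
  have hfin : (p.verts ∪ ⋃ E ∈ p.edges, (E : Set ℕ)).Finite :=
    ((Set.finite_Iic _).image _).union
      (((Set.finite_Iio _).image _).biUnion fun E _ => E.finite_toSet)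
  obtain ⟨b, hb⟩ := hfin.bddAbove
  exact ⟨b, fun x hx => hb (Or.inl hx),
    fun E hE z hz => hb (Or.inr (Set.mem_biUnion hE (Finset.mem_coe.2 hz)))⟩

def single (x : ℕ) : BergePrefix H where
  len := 0
  v _ := x
  e _ := ∅
  injOn_v i hi j hj _ := by simp_all
  injOn_e i hi := by simp at hi
  isBerge i hi := by simp at hi

def snoc (p : BergePrefix H) (x : ℕ) (E : Finset ℕ) (hx : x ∉ p.verts) (hE : E ∉ p.edges)
    (hEH : E ∈ H) (hlast : p.last ∈ E) (hxE : x ∈ E) : BergePrefix H where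
  len := p.len + 1
  v i := if i ≤ p.len then p.v i else x
  e i := if i < p.len then p.e i else E
  injOn_v i hi j hj hij := by
    simp only [Set.mem_Iic] at hi hj
    dsimp only at hij
    split_ifs at hij with h₁ h₂ h₂
    · exact p.injOn_v h₁ h₂ hij
    · exact (hx ⟨i, h₁, hij⟩).elim
    · exact (hx ⟨j, h₂, hij.symm⟩).elim
    · omega
  injOn_e i hi j hj hij := by
    simp only [Set.mem_Iio] at hi hj
    dsimp only at hij
    split_ifs at hij with h₁ h₂ h₂
    · exact p.injOn_e h₁ h₂ hij
    · exact (hE ⟨i, h₁, hij⟩).elim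
    · exact (hE ⟨j, h₂, hij.symm⟩).elim
    · omega
  isBerge i hi := by
    by_cases h : i < p.len
    · simpa [h, h.le, Nat.succ_le_of_lt h] using p.isBerge i h
    · obtain rfl : i = p.len := by omega
      simpa using ⟨hEH, hlast, hxE⟩

section Snoc

variable (p : BergePrefix H) {x : ℕ} {E : Finset ℕ} (hx : x ∉ p.verts) (hE : E ∉ p.edges)
  (hEH : E ∈ H) (hlast : p.last ∈ E) (hxE : x ∈ E)

theorem le_snoc : p ≤ p.snoc x E hx hE hEH hlast hxE :=
  ⟨Nat.le_succ _, fun i hi => by simp [snoc, Set.mem_Iic.1 hi],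
    fun i hi => by simp [snoc, Set.mem_Iio.1 hi]⟩

@[simp]
theorem len_snoc : (p.snoc x E hx hE hEH hlast hxE).len = p.len + 1 := rfl

@[simp]
theorem last_snoc : (p.snoc x E hx hE hEH hlast hxE).last = x := by simp [snoc, last]

@[simp]
theorem verts_snoc : (p.snoc x E hx hE hEH hlast hxE).verts = insert x p.verts := by
  ext y
  simp only [verts, snoc, Set.mem_image, Set.mem_Iic, Set.mem_insert_iff]
  constructor
  · rintro ⟨i, hi, rfl⟩
    split_ifs with h
    · exact Or.inr ⟨i, h, rfl⟩
    · exact Or.inl rfl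
  · rintro (rfl | ⟨i, hi, rfl⟩)
    · exact ⟨p.len + 1, le_rfl, by simp⟩
    · exact ⟨i, by omega, by simp [hi]⟩

@[simp]
theorem edges_snoc : (p.snoc x E hx hE hEH hlast hxE).edges = insert E p.edges := by
  ext F
  simp only [edges, snoc, Set.mem_image, Set.mem_Iio, Set.mem_insert_iff]
  constructor
  · rintro ⟨i, hi, rfl⟩
    split_ifs with h
    · exact Or.inr ⟨i, h, rfl⟩
    · exact Or.inl rfl
  · rintro (rfl | ⟨i, hi, rfl⟩)
    · exact ⟨p.len, by omega, by simp⟩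
    · exact ⟨i, by omega, by simp [hi]⟩

end Snoc

variable {M : Set ℕ}

/-- The Berge-path `last, w, m, t, m'`: `m ∈ M` is reached from `t`, `w` joins `last` to `m`,
and `m' ∈ M` is reached from `t` again so that the new last vertex lies in `M`. All new
vertices and edges are kept fresh by choosing them beyond everything used before. -/
theorem exists_extension (hJ : Joinable H M) (hR : ∀ x, Reaches H M x) (p : BergePrefix H)
    (hp : p.last ∈ M) {t : ℕ} (ht : t ∉ p.verts) :
    ∃ q, p ≤ q ∧ p.len < q.len ∧ q.last ∈ M ∧ t ∈ q.verts := by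
  obtain ⟨b, hbv, hbe⟩ := p.exists_bound
  obtain ⟨E, hEH, htE, m, hmE, hmM, hm⟩ := hR t (max b t)
  obtain ⟨hbm, htm⟩ := max_lt_iff.1 hm
  have hlast_m : p.last < m := (hbv _ ⟨p.len, Set.mem_Iic.2 le_rfl, rfl⟩).trans_lt hbm
  obtain ⟨w, hw, F₁, hF₁H, F₂, hF₂H, hF, hlast₁, hw₁, hw₂, hm₂⟩ :=
    hJ _ hp m hmM hlast_m.ne (E.sup id)
  have hE_lt_w : ∀ z ∈ E, z < w := fun z hz => (Finset.le_sup (f := id) hz).trans_lt hw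
  have hbw : b < w := hbm.trans (hE_lt_w m hmE)
  have hw_E : w ∉ E := fun h => (hE_lt_w w h).false
  have hEF₁ : E ≠ F₁ := fun h => hw_E (h ▸ hw₁)
  have hEF₂ : E ≠ F₂ := fun h => hw_E (h ▸ hw₂)
  let p₁ := p.snoc w F₁ (fun h => (hbv w h).not_gt hbw)
    (fun h => (hbe F₁ h w hw₁).not_gt hbw) hF₁H hlast₁ hw₁
  let p₂ := p₁.snoc m F₂
    (by simpa [p₁, (hE_lt_w m hmE).ne] using fun h => (hbv m h).not_gt hbm)
    (by simpa [p₁, hF.symm] using fun h => (hbe F₂ h w hw₂).not_gt hbw)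
    hF₂H (by simpa [p₁] using hw₂) hm₂
  let p₃ := p₂.snoc t E
    (by simpa [p₂, p₁, htm.ne, (hE_lt_w t htE).ne] using ht)
    (by simpa [p₂, p₁, hEF₁, hEF₂] using fun h => (hbe E h m hmE).not_gt hbm)
    hEH (by simpa [p₂] using hmE) htE
  obtain ⟨b', hbv', hbe'⟩ := p₃.exists_bound
  obtain ⟨E', hE'H, htE', m', hm'E', hm'M, hm'⟩ := hR t b'
  let p₄ := p₃.snoc m' E' (fun h => (hbv' m' h).not_gt hm')
    (fun h => (hbe' E' h m' hm'E').not_gt hm') hE'H (by simpa [p₃] using htE') hm'E'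
  refine ⟨p₄, ?_, by simp [p₄, p₃, p₂, p₁]; omega, by simpa [p₄] using hm'M,
    by simp [p₄, p₃]⟩
  exact (p.le_snoc ..).trans <| (p₁.le_snoc ..).trans <| (p₂.le_snoc ..).trans (p₃.le_snoc ..)

theorem exists_le_mem_verts (hJ : Joinable H M) (hR : ∀ x, Reaches H M x)
    (p : BergePrefix H) (hp : p.last ∈ M) (t : ℕ) :
    ∃ q, p ≤ q ∧ p.len < q.len ∧ q.last ∈ M ∧ t ∈ q.verts := by
  by_cases ht : t ∈ p.verts
  · obtain ⟨t', ht'⟩ := ((Set.finite_Iic p.len).image p.v).exists_notMem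
    obtain ⟨q, hpq, hlen, hq, -⟩ := exists_extension hJ hR p hp ht'
    exact ⟨q, hpq, hlen, hq, verts_mono hpq ht⟩
  · exact exists_extension hJ hR p hp ht

theorem exists_bijective_of_monotone {s : ℕ → BergePrefix H} (hs : Monotone s)
    (hlen : ∀ n, n ≤ (s n).len) (hcover : ∀ x, ∃ n, x ∈ (s n).verts) :
    ∃ (v : ℕ → ℕ) (e : ℕ → Finset ℕ), Bijective v ∧ Injective e ∧
      ∀ i, e i ∈ H ∧ v i ∈ e i ∧ v (i + 1) ∈ e i := by
  have hv : ∀ n i, i ≤ (s n).len → (s n).v i = (s i).v i := by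
    intro n i hi
    rcases le_total n i with h | h
    · exact (v_eq_of_le (hs h) hi).symm
    · exact v_eq_of_le (hs h) (hlen i)
  have he : ∀ n i, i < (s n).len → (s n).e i = (s (i + 1)).e i := by
    intro n i hi
    rcases le_total n (i + 1) with h | h
    · exact (e_eq_of_le (hs h) hi).symm
    · exact e_eq_of_le (hs h) (hlen (i + 1))
  refine ⟨fun i => (s i).v i, fun i => (s (i + 1)).e i,
    ⟨fun i j hij => ?_, fun x => ?_⟩, fun i j hij => ?_, fun i => ?_⟩
  · have hi : i ≤ (s (i + j)).len := (Nat.le_add_right i j).trans (hlen _)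
    have hj : j ≤ (s (i + j)).len := (Nat.le_add_left j i).trans (hlen _)
    exact (s (i + j)).injOn_v hi hj (by simpa only [hv _ _ hi, hv _ _ hj] using hij)
  · obtain ⟨n, i, hi, rfl⟩ := hcover x
    exact ⟨i, (hv n i hi).symm⟩
  · have hi : i < (s (i + j + 1)).len := by have := hlen (i + j + 1); omega
    have hj : j < (s (i + j + 1)).len := by have := hlen (i + j + 1); omega
    exact (s (i + j + 1)).injOn_e hi hj (by simpa only [he _ _ hi, he _ _ hj] using hij)
  · have hi : i < (s (i + 1)).len := hlen (i + 1)
    simpa only [hv (i + 1) i hi.le] using (s (i + 1)).isBerge i hi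

end BergePrefix

theorem exists_bijective_berge_path {H : Set (Finset ℕ)} {M : Set ℕ} (hJ : Joinable H M)
    (hR : ∀ x, Reaches H M x) :
    ∃ (v : ℕ → ℕ) (e : ℕ → Finset ℕ), Bijective v ∧ Injective e ∧
      ∀ i, e i ∈ H ∧ v i ∈ e i ∧ v (i + 1) ∈ e i := by
  obtain ⟨-, -, -, m, -, hm, -⟩ := hR 0 0
  choose! next le_next len_lt_next last_next mem_next using
    BergePrefix.exists_le_mem_verts hJ hR
  let s : ℕ → BergePrefix H := fun n => Nat.rec (.single m) (fun i p => next p i) n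
  have hs : ∀ n, (s n).last ∈ M := fun n => by
    induction n with
    | zero => exact hm
    | succ n ih => exact last_next _ ih n
  refine BergePrefix.exists_bijective_of_monotone
    (monotone_nat_of_le_succ fun n => le_next _ (hs n) n) (fun n => ?_)
    (fun x => ⟨x + 1, mem_next _ (hs x) x⟩)
  induction n with
  | zero => exact Nat.zero_le _
  | succ n ih => exact Nat.succ_le_of_lt (ih.trans_lt (len_lt_next _ (hs n) n))

section Cone

variable {β : Type*} (k : ℕ) (φ : Finset ℕ → β)

def monoEdges (c : β) : Set (Finset ℕ) := {E | E.card = k ∧ φ E = c}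

/-- A monochromatic cone with apex `Y` and base `M`. -/
def IsMonoCone (c : β) (Y : Finset ℕ) (M : Set ℕ) : Prop :=
  Disjoint (Y : Set ℕ) M ∧ ∀ C : Finset ℕ, ↑C ⊆ M → Y.card + C.card = k → φ (Y ∪ C) = c

variable {k φ} {c : β} {Y : Finset ℕ} {M : Set ℕ}

theorem IsMonoCone.mono {M' : Set ℕ} (h : IsMonoCone k φ c Y M) (hM : M' ⊆ M) :
    IsMonoCone k φ c Y M' :=
  ⟨h.1.mono_right hM, fun C hC => h.2 C (hC.trans hM)⟩

theorem IsMonoCone.exists_edge (h : IsMonoCone k φ c Y M) (hM : M.Infinite) {A : Finset ℕ}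
    (hA : ↑A ⊆ M) (hcard : Y.card + A.card ≤ k) :
    ∃ E ∈ monoEdges k φ c, Y ⊆ E ∧ A ⊆ E ∧ ↑E ⊆ ↑Y ∪ M := by
  obtain ⟨D, hD, hDcard⟩ := (hM.sdiff A.finite_toSet).exists_subset_card_eq (k - Y.card - A.card)
  have hAD : Disjoint A D := Finset.disjoint_left.2 fun x hxA hxD => (hD hxD).2 hxA
  have hC : ↑(A ∪ D) ⊆ M := by
    rw [Finset.coe_union]
    exact Set.union_subset hA fun x hx => (hD hx).1
  have hYC : Disjoint Y (A ∪ D) := Finset.disjoint_coe.1 (h.1.mono_right hC)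
  have hCcard : Y.card + (A ∪ D).card = k := by
    rw [Finset.card_union_of_disjoint hAD, hDcard]
    omega
  refine ⟨Y ∪ (A ∪ D), ⟨?_, h.2 _ hC hCcard⟩, Finset.subset_union_left,
    Finset.subset_union_left.trans Finset.subset_union_right, ?_⟩
  · rw [Finset.card_union_of_disjoint hYC, hCcard]
  · rw [Finset.coe_union]
    exact Set.union_subset_union_right _ hC

theorem IsMonoCone.reaches_of_mem_apex (h : IsMonoCone k φ c Y M) (hM : M.Infinite)
    (hY : Y.card < k) {x : ℕ} (hx : x ∈ Y) : Reaches (monoEdges k φ c) M x := fun n => by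
  obtain ⟨m, hmM, hnm⟩ := hM.exists_gt n
  obtain ⟨E, hE, hYE, hmE, -⟩ :=
    h.exists_edge hM (A := {m}) (by simpa using hmM) (by simpa using hY)
  exact ⟨E, hE, hYE hx, m, hmE (Finset.mem_singleton_self m), hmM, hnm⟩

theorem IsMonoCone.reaches_of_mem_base (h : IsMonoCone k φ c Y M) (hM : M.Infinite)
    (hY : Y.card + 2 ≤ k) {x : ℕ} (hx : x ∈ M) : Reaches (monoEdges k φ c) M x := fun n => by
  obtain ⟨m, hmM, hm⟩ := hM.exists_gt (max n x)
  obtain ⟨E, hE, -, hxmE, -⟩ := h.exists_edge hM (A := {x, m})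
    (by simp [Set.insert_subset_iff, hx, hmM]) ((Nat.add_le_add_left Finset.card_le_two _).trans hY)
  exact ⟨E, hE, hxmE (by simp), m, hxmE (by simp), hmM, (max_lt_iff.1 hm).1⟩

theorem IsMonoCone.joinable (h : IsMonoCone k φ c Y M) (hM : M.Infinite) (hY : Y.card + 2 ≤ k) :
    Joinable (monoEdges k φ c) M := by
  intro u hu v hv huv n
  obtain ⟨w, hwM, hw⟩ := hM.exists_gt (n + u + v)
  obtain ⟨F₁, hF₁, -, huwF₁, -⟩ := h.exists_edge hM (A := {u, w})
    (by simp [Set.insert_subset_iff, hu, hwM]) ((Nat.add_le_add_left Finset.card_le_two _).trans hY)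
  -- building `F₂` over `M \ {u}` keeps `u` out of it
  obtain ⟨F₂, hF₂, -, hwvF₂, hF₂M⟩ := (h.mono Set.sdiff_subset).exists_edge
    (hM.sdiff (Set.finite_singleton u)) (A := {w, v})
    (by simp [Set.insert_subset_iff, hwM, hv, huv.symm]; omega)
    ((Nat.add_le_add_left Finset.card_le_two _).trans hY)
  have huF₂ : u ∉ F₂ := fun huF₂ => by
    rcases hF₂M huF₂ with huY | ⟨-, hne⟩
    · exact Set.disjoint_left.1 h.1 huY hu
    · exact hne rfl
  exact ⟨w, by omega, F₁, hF₁, F₂, hF₂, fun hF => huF₂ (hF ▸ huwF₁ (by simp)),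
    huwF₁ (by simp), huwF₁ (by simp), hwvF₂ (by simp), hwvF₂ (by simp)⟩

end Cone

section Blocked

variable {β : Type*} [Fintype β] {k : ℕ} {φ : Finset ℕ → β}

variable (k φ) in
open Classical in
noncomputable def blockedColours (Y : Finset ℕ) (M : Set ℕ) : Finset β :=
  {b | ∃ x ∈ Y, ¬Reaches (monoEdges k φ b) M x}

theorem blockedColours_mono {Y Y' : Finset ℕ} {M M' : Set ℕ} (hY : Y ⊆ Y') (hM : M' ⊆ M) :
    blockedColours k φ Y M ⊆ blockedColours k φ Y' M' := by
  classical
  intro b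
  simp only [blockedColours, Finset.mem_filter, Finset.mem_univ, true_and]
  exact fun ⟨x, hx, hxb⟩ => ⟨x, hY hx, fun h => hxb (h.mono hM)⟩

theorem exists_joinable_reaches_of_isMonoCone (hk : Fintype.card β < k) {c : β}
    {Y : Finset ℕ} {M : Set ℕ} (hM : M.Infinite) (h : IsMonoCone k φ c Y M)
    (hY : Y.card ≤ (blockedColours k φ Y M).card) :
    ∃ c M, Joinable (monoEdges k φ c) M ∧ ∀ x, Reaches (monoEdges k φ c) M x := by
  classical
  have hblocked_le := Finset.card_le_univ (blockedColours k φ Y M)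
  have hc : c ∉ blockedColours k φ Y M := by
    simp only [blockedColours, Finset.mem_filter, Finset.mem_univ, true_and, not_exists,
      not_and, not_not]
    exact fun x hx => h.reaches_of_mem_apex hM (by omega) hx
  have hblocked_lt := Finset.card_lt_univ_of_notMem hc
  by_cases hall : ∀ x, Reaches (monoEdges k φ c) M x
  · exact ⟨c, M, h.joinable hM (by omega), hall⟩
  obtain ⟨x, hx⟩ := not_forall.1 hall
  have hxY : x ∉ Y := fun hxY => hx (h.reaches_of_mem_apex hM (by omega) hxY)
  have hxM : x ∉ M := fun hxM => hx (h.reaches_of_mem_base hM (by omega) hxM)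
  obtain ⟨c', T, hTM, hT, hTc⟩ := exists_infinite_subset_forall_card_eq (k - (Y.card + 1))
    (fun C => φ (insert x Y ∪ C)) hM
  have hcard : (insert x Y).card = Y.card + 1 := Finset.card_insert_of_notMem hxY
  have hcone : IsMonoCone k φ c' (insert x Y) T := by
    refine ⟨?_, fun C hC hCk => hTc C hC (by omega)⟩
    rw [Finset.coe_insert, Set.disjoint_insert_left]
    exact ⟨fun hxT => hxM (hTM hxT), h.1.mono_right hTM⟩
  have hblocked : insert c (blockedColours k φ Y M) ⊆ blockedColours k φ (insert x Y) T := by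
    refine Finset.insert_subset ?_ (blockedColours_mono (Finset.subset_insert _ _) hTM)
    simp only [blockedColours, Finset.mem_filter, Finset.mem_univ, true_and]
    exact ⟨x, Finset.mem_insert_self _ _, fun hxT => hx (hxT.mono hTM)⟩
  refine exists_joinable_reaches_of_isMonoCone hk hT hcone ?_
  have := Finset.card_le_card hblocked
  rw [Finset.card_insert_of_notMem hc] at this
  omega
termination_by Fintype.card β - Y.card
decreasing_by
  rw [hcard]
  omega

theorem exists_joinable_reaches (hk : Fintype.card β < k) (φ : Finset ℕ → β) :
    ∃ c M, Joinable (monoEdges k φ c) M ∧ ∀ x, Reaches (monoEdges k φ c) M x := by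
  obtain ⟨c, M, -, hM, hMc⟩ := exists_infinite_subset_forall_card_eq k φ Set.infinite_univ
  exact exists_joinable_reaches_of_isMonoCone (Y := ∅) hk hM
    ⟨by simp, fun C hC hCk => by simpa using hMc C hC (by simpa using hCk)⟩ (by simp)

end Blocked

/-- A monochromatic `t`-tight Berge-path of colour `c` (finite of length ≥ 1,
one-way infinite, or a single vertex with no edges) in the complete `k`-uniform
hypergraph on `ℕ` edge-coloured by `φ`, with core `X`. The core vertex sequence
is `v 0, v 1, …` (of length `N`, possibly `⊤`), the edges are `e 0, e 1, …`
(pairwise distinct `k`-sets of colour `c`), and edge `e i` contains the `t`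
consecutive core vertices `v i, …, v (i + t - 1)`. -/
def IsMonoBergePath (k t : ℕ) {r : ℕ} (φ : Finset ℕ → Fin r) (c : Fin r)
    (X : Set ℕ) : Prop :=
  (∃ v : ℕ, X = {v}) ∨
  ∃ (N : ℕ∞) (v : ℕ → ℕ) (e : ℕ → Finset ℕ),
    (t : ℕ∞) ≤ N ∧
    (∀ i j : ℕ, (i : ℕ∞) < N → (j : ℕ∞) < N → v i = v j → i = j) ∧
    X = {x | ∃ i : ℕ, (i : ℕ∞) < N ∧ v i = x} ∧
    (∀ i : ℕ, ((i + t : ℕ) : ℕ∞) ≤ N →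
      (e i).card = k ∧ φ (e i) = c ∧ ∀ j : ℕ, i ≤ j → j < i + t → v j ∈ e i) ∧
    (∀ i j : ℕ, ((i + t : ℕ) : ℕ∞) ≤ N → ((j + t : ℕ) : ℕ∞) ≤ N → e i = e j → i = j)

theorem mono_hamiltonian_berge_path_general (k : ℕ)
    (φ : Finset ℕ → Fin (k - 1)) :
    ∃ c : Fin (k - 1), IsMonoBergePath k 2 φ c Set.univ := by
  have hk : Fintype.card (Fin (k - 1)) < k := by
    have := (φ ∅).pos
    rw [Fintype.card_fin]
    omega
  obtain ⟨c, M, hJ, hR⟩ := exists_joinable_reaches hk φ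
  obtain ⟨v, e, hv, he, hve⟩ := exists_bijective_berge_path hJ hR
  refine ⟨c, Or.inr ⟨⊤, v, e, le_top, fun i j _ _ h => hv.1 h, ?_, fun i _ => ?_,
    fun i j _ _ h => he h⟩⟩
  · refine (Set.eq_univ_of_forall fun x => ?_).symm
    obtain ⟨i, rfl⟩ := hv.2 x
    exact ⟨i, WithTop.coe_lt_top i, rfl⟩
  · obtain ⟨⟨hcard, hcol⟩, hi, hi'⟩ := hve i
    refine ⟨hcard, hcol, fun j hij hj => ?_⟩
    obtain rfl | rfl : j = i ∨ j = i + 1 := by omega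
    exacts [hi, hi']

/-- Every `(k-1)`-edge-coloured countably infinite complete `k`-graph contains
a monochromatic (2-tight) Berge-path whose core is all of `ℕ`, i.e. a
monochromatic Hamiltonian Berge-path. -/
theorem mono_hamiltonian_berge_path (k : ℕ) (hk : 2 ≤ k)
    (φ : Finset ℕ → Fin (k - 1)) :
    ∃ c : Fin (k - 1), IsMonoBergePath k 2 φ c Set.univ :=
  mono_hamiltonian_berge_path_general k φ
end

section
/- For all k ≥ 2, there is a k-colouring of the edges of the complete k-uniform hypergraph on ℕ (i.e. of the k-sets of ℕ) such that ℕ is not covered by the core of a single monochromatic Berge-path. -/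
open Finset

-- The colouring: give `e` a colour `c` with `c ∉ e`; colour `0` also requires `k ∉ e`.
open scoped Classical in
noncomputable def myColour (k : ℕ) (hk : 0 < k) (e : Finset ℕ) : Fin k :=
  if h : ∃ c : Fin k, ((c : ℕ) ∉ e ∧ ((c : ℕ) = 0 → k ∉ e)) then h.choose else ⟨0, hk⟩

lemma myColour_spec (k : ℕ) (hk : 0 < k) (e : Finset ℕ) :
    ((myColour k hk e : ℕ) ∉ e ∧ ((myColour k hk e : ℕ) = 0 → k ∉ e)) ∨
      ((myColour k hk e : ℕ) = 0 ∧ ∀ c : Fin k, (c : ℕ) ∈ e ∨ ((c : ℕ) = 0 ∧ k ∈ e)) := by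
  classical
  unfold myColour
  split
  · rename_i h
    left
    exact h.choose_spec
  · rename_i h
    right
    push_neg at h
    constructor
    · simp
    · intro c
      by_cases hce : (c : ℕ) ∈ e
      · exact Or.inl hce
      · exact Or.inr (h c hce)

lemma myColour_ne_zero (k : ℕ) (hk : 0 < k) (e : Finset ℕ)
    (h : (myColour k hk e : ℕ) ≠ 0) : (myColour k hk e : ℕ) ∉ e := by
  rcases myColour_spec k hk e with ⟨h1, _⟩ | ⟨h1, _⟩
  · exact h1
  · exact absurd h1 h

lemma myColour_zero_zero_mem (k : ℕ) (hk : 0 < k) (e : Finset ℕ)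
    (hcard : e.card = k) (h0 : (myColour k hk e : ℕ) = 0) (hmem : (0 : ℕ) ∈ e) :
    e = Finset.range k := by
  rcases myColour_spec k hk e with ⟨h1, _⟩ | ⟨_, h2⟩
  · rw [h0] at h1; exact absurd hmem h1
  · have hsub : Finset.range k ⊆ e := by
      intro m hm
      rw [Finset.mem_range] at hm
      rcases Nat.eq_zero_or_pos m with rfl | hmpos
      · exact hmem
      · rcases h2 ⟨m, hm⟩ with h | ⟨h, _⟩
        · exact h
        · simp at h; omega
    exact (Finset.eq_of_subset_of_card_le hsub (by simp [hcard])).symm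

lemma myColour_zero_k_mem (k : ℕ) (hk : 0 < k) (e : Finset ℕ)
    (hcard : e.card = k) (h0 : (myColour k hk e : ℕ) = 0) (hmem : k ∈ e) :
    e = Finset.Icc 1 k := by
  rcases myColour_spec k hk e with ⟨h1, h2⟩ | ⟨_, h2⟩
  · exact absurd hmem (h2 h0)
  · have hsub : Finset.Icc 1 k ⊆ e := by
      intro m hm
      rw [Finset.mem_Icc] at hm
      rcases eq_or_lt_of_le hm.2 with rfl | hlt
      · exact hmem
      · rcases h2 ⟨m, hlt⟩ with h | ⟨h, _⟩
        · exact h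
        · simp at h; omega
    exact (Finset.eq_of_subset_of_card_le hsub (by simp [hcard])).symm

/-- There is a `k`-edge-colouring of the complete `k`-graph on `ℕ` such that
no single monochromatic (2-tight) Berge-path has core covering all of `ℕ`. -/
theorem no_hamiltonian_berge_path_k_colours (k : ℕ) (hk : 2 ≤ k) :
    ∃ φ : Finset ℕ → Fin k,
      ¬ ∃ c : Fin k, IsMonoBergePath k 2 φ c Set.univ := by
  have hk0 : 0 < k := by omega
  refine ⟨myColour k hk0, ?_⟩
  rintro ⟨c, hpath⟩
  rcases hpath with ⟨v, hv⟩ | ⟨N, v, e, hN2, hvinj, hX, hedge, heinj⟩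
  · have : v + 1 ∈ ({v} : Set ℕ) := hv ▸ Set.mem_univ _
    simp at this
  -- N must be ⊤
  have hNtop : N = ⊤ := by
    rcases N with _ | n
    · rfl
    · exfalso
      have hsub : (Set.univ : Set ℕ) ⊆ v '' (Set.Iio n) := by
        intro x hx
        have hx' : x ∈ {x | ∃ i : ℕ, (i : ℕ∞) < (n : ℕ∞) ∧ v i = x} := hX ▸ hx
        obtain ⟨i, hi, hvi⟩ := hx'
        exact ⟨i, by exact_mod_cast hi, hvi⟩
      exact Set.infinite_univ (Set.Finite.subset ((Set.finite_Iio n).image v) hsub)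
  subst hNtop
  have hedge' : ∀ i : ℕ, (e i).card = k ∧ myColour k hk0 (e i) = c ∧
      v i ∈ e i ∧ v (i + 1) ∈ e i := by
    intro i
    obtain ⟨h1, h2, h3⟩ := hedge i (le_top)
    exact ⟨h1, h2, h3 i le_rfl (by omega), h3 (i + 1) (by omega) (by omega)⟩
  have hsurj : ∀ x : ℕ, ∃ i : ℕ, v i = x := by
    intro x
    have hx : x ∈ {x | ∃ i : ℕ, (i : ℕ∞) < (⊤ : ℕ∞) ∧ v i = x} := hX ▸ Set.mem_univ x
    obtain ⟨i, _, hvi⟩ := hx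
    exact ⟨i, hvi⟩
  by_cases hc : (c : ℕ) = 0
  · -- colour 0: vertices 0 and k must both be v 0
    obtain ⟨i, hi⟩ := hsurj 0
    obtain ⟨j, hj⟩ := hsurj k
    have hmem0 : ∀ m : ℕ, 0 ∈ e m → e m = Finset.range k := by
      intro m hm
      obtain ⟨h1, h2, _⟩ := hedge' m
      exact myColour_zero_zero_mem k hk0 (e m) h1 (by rw [h2]; exact hc) hm
    have hmemk : ∀ m : ℕ, k ∈ e m → e m = Finset.Icc 1 k := by
      intro m hm
      obtain ⟨h1, h2, _⟩ := hedge' m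
      exact myColour_zero_k_mem k hk0 (e m) h1 (by rw [h2]; exact hc) hm
    have hi0 : i = 0 := by
      by_contra hne
      obtain ⟨_, _, h3, _⟩ := hedge' i
      obtain ⟨_, _, _, h4⟩ := hedge' (i - 1)
      have hvi : v i ∈ e (i - 1) := by
        have : i - 1 + 1 = i := by omega
        rw [← this]; exact h4
      have e1 : e i = Finset.range k := hmem0 i (hi ▸ h3)
      have e2 : e (i - 1) = Finset.range k := hmem0 (i - 1) (hi ▸ hvi)
      have := heinj i (i - 1) le_top le_top (by rw [e1, e2])
      omega
    have hj0 : j = 0 := by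
      by_contra hne
      obtain ⟨_, _, h3, _⟩ := hedge' j
      obtain ⟨_, _, _, h4⟩ := hedge' (j - 1)
      have hvj : v j ∈ e (j - 1) := by
        have : j - 1 + 1 = j := by omega
        rw [← this]; exact h4
      have e1 : e j = Finset.Icc 1 k := hmemk j (hj ▸ h3)
      have e2 : e (j - 1) = Finset.Icc 1 k := hmemk (j - 1) (hj ▸ hvj)
      have := heinj j (j - 1) le_top le_top (by rw [e1, e2])
      omega
    rw [hi0] at hi; rw [hj0] at hj
    omega
  · -- colour c ≠ 0: vertex c is in no edge of colour c
    obtain ⟨i, hi⟩ := hsurj (c : ℕ)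
    obtain ⟨h1, h2, h3, _⟩ := hedge' i
    have : (myColour k hk0 (e i) : ℕ) ∉ e i :=
      myColour_ne_zero k hk0 (e i) (by rw [h2]; exact hc)
    rw [h2] at this
    exact this (hi ▸ h3)
end

section
/- Let k ≥ t ≥ 2, let B₁, B₂, … be a partition of ℕ indexed by the s-subsets of [r] in lexicographic order (r = s(k−t+1)+1), with all blocks finite except the last, and suppose |B_I| ≥ s·t·∑_{J ≺ I}(|B_J|+1) for every index I. Colour each k-set e by: order its elements x¹,…,xᵏ so that the indices I(xⁱ) of their blocks are lexicographically non-decreasing, and give e any colour in [r] ∖ ⋃_{i ≤ k−t+1} I(xⁱ). Then for any s-subset C of [r] containing all colours of given monochromatic t-tight Berge-paths P₁,…,P_s, every edge e of colour in C that meets B_C satisfies |e ∩ ⋃_{J ≺ C} B_J| ≥ k − t + 1. -/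
/-- Strict lexicographic order on finsets of `Fin r` (compare the smallest
element in which they differ). -/
def LexLT {r : ℕ} (A B : Finset (Fin r)) : Prop :=
  ∃ m : Fin r, m ∈ A ∧ m ∉ B ∧ ∀ x : Fin r, x < m → (x ∈ A ↔ x ∈ B)

/-- Non-strict lexicographic order on finsets of `Fin r`. -/
def LexLE {r : ℕ} (A B : Finset (Fin r)) : Prop :=
  A = B ∨ LexLT A B

/-!
The colour of `e` lies in `C = I(x₀)` for some `x₀ ∈ e`, but avoids the block indices of the
`k - t + 1` lexicographically smallest vertices of `e`. So `x₀` is not among them, and each of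
them has block index `≼ C` and `≠ C`, i.e. `≺ C`.
-/

theorem LexLE.lexLT_of_not_mem_of_mem {r : ℕ} {A B : Finset (Fin r)} {c : Fin r}
    (h : LexLE A B) (hcA : c ∉ A) (hcB : c ∈ B) : LexLT A B :=
  h.resolve_left fun hAB => hcA (hAB ▸ hcB)

theorem lexLT_of_mem_initial_of_avoids {α : Type*} {r : ℕ} (Idx : α → Finset (Fin r))
    {e e' : Finset α} {c : Fin r} {x₀ : α} (hx₀ : x₀ ∈ e) (hc : c ∈ Idx x₀)
    (hmin : ∀ x ∈ e', ∀ y ∈ e, y ∉ e' → LexLE (Idx x) (Idx y))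
    (havoid : ∀ x ∈ e', c ∉ Idx x) :
    ∀ x ∈ e', LexLT (Idx x) (Idx x₀) := by
  have hx₀e' : x₀ ∉ e' := fun h => havoid x₀ h hc
  exact fun x hx => (hmin x hx x₀ hx₀ hx₀e').lexLT_of_not_mem_of_mem (havoid x hx) hc

open Classical in
/-- `Idx x` is the index `I(x)` of the block containing `x`, so `B_I = Idx ⁻¹' {I}`. -/
theorem lower_bound_colouring_edge_property_general (s k t : ℕ)
    (Idx : ℕ → Finset (Fin (s * (k - t + 1) + 1)))
    (φ : Finset ℕ → Fin (s * (k - t + 1) + 1))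
    (hφ : ∀ e : Finset ℕ, e.card = k → ∃ e' ⊆ e, e'.card = k - t + 1 ∧
      (∀ x ∈ e', ∀ y ∈ e, y ∉ e' → LexLE (Idx x) (Idx y)) ∧
      ∀ x ∈ e', φ e ∉ Idx x) :
    ∀ C : Finset (Fin (s * (k - t + 1) + 1)), C.card = s →
      ∀ e : Finset ℕ, e.card = k → φ e ∈ C → (∃ x ∈ e, Idx x = C) →
        k - t + 1 ≤ ((↑e : Set ℕ) ∩ {x | LexLT (Idx x) C}).ncard := by
  rintro C - e he hφC ⟨x₀, hx₀, rfl⟩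
  obtain ⟨e', he'e, he'card, hmin, havoid⟩ := hφ e he
  have hbelow := lexLT_of_mem_initial_of_avoids Idx hx₀ hφC hmin havoid
  have hsub : (↑e' : Set ℕ) ⊆ ↑e ∩ {x | LexLT (Idx x) (Idx x₀)} :=
    fun x hx => ⟨he'e hx, hbelow x hx⟩
  calc k - t + 1 = (↑e' : Set ℕ).ncard := by rw [Set.ncard_coe_finset, he'card]
    _ ≤ _ := Set.ncard_le_ncard hsub (e.finite_toSet.inter_of_left _)

open Classical in
/-- Key property of the lower-bound colouring. The blocks are encoded by
`Idx : ℕ → Finset (Fin r)` (with `r = s(k-t+1)+1`), `Idx x` being the `s`-set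
indexing the block `B_{I(x)} = Idx ⁻¹' {I(x)}` containing `x`; all blocks
except the lexicographically largest one are finite, and each block satisfies
the growth condition `|B_I| ≥ s·t·∑_{J ≺ I} (|B_J| + 1)` (infinite blocks
satisfy it trivially). The colouring `φ` gives each `k`-set `e` a colour
avoiding `⋃ I(x)` over the `k-t+1` elements `x` of `e` whose block indices are
lexicographically smallest. Conclusion: every `k`-edge whose colour lies in an
`s`-set `C` and which meets the block `B_C` has at least `k-t+1` vertices in
`⋃_{J ≺ C} B_J`. -/
theorem lower_bound_colouring_edge_property (s k t : ℕ) (ht : 2 ≤ t) (htk : t ≤ k)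
    (Idx : ℕ → Finset (Fin (s * (k - t + 1) + 1)))
    (hIdx : ∀ x : ℕ, (Idx x).card = s)
    (hfin : ∀ I : Finset (Fin (s * (k - t + 1) + 1)), I.card = s →
      (∃ J : Finset (Fin (s * (k - t + 1) + 1)), J.card = s ∧ LexLT I J) →
      (Idx ⁻¹' {I}).Finite)
    (hgrowth : ∀ I : Finset (Fin (s * (k - t + 1) + 1)), I.card = s →
      (Idx ⁻¹' {I}).Infinite ∨
      s * t * ∑ J ∈ Finset.univ.filter
          (fun J : Finset (Fin (s * (k - t + 1) + 1)) => J.card = s ∧ LexLT J I),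
          ((Idx ⁻¹' {J}).ncard + 1) ≤ (Idx ⁻¹' {I}).ncard)
    (φ : Finset ℕ → Fin (s * (k - t + 1) + 1))
    (hφ : ∀ e : Finset ℕ, e.card = k → ∃ e' ⊆ e, e'.card = k - t + 1 ∧
      (∀ x ∈ e', ∀ y ∈ e, y ∉ e' → LexLE (Idx x) (Idx y)) ∧
      ∀ x ∈ e', φ e ∉ Idx x) :
    ∀ C : Finset (Fin (s * (k - t + 1) + 1)), C.card = s →
      ∀ e : Finset ℕ, e.card = k → φ e ∈ C → (∃ x ∈ e, Idx x = C) →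
        k - t + 1 ≤ ((↑e : Set ℕ) ∩ {x | LexLT (Idx x) C}).ncard :=
  lower_bound_colouring_edge_property_general s k t Idx φ hφ
end

section
/- Let t ≥ 2, let P = (X, F) be a t-tight Berge-path with core vertex sequence v₁, v₂, … (finite or infinite), let B ⊆ ℕ, and let F' be the set of t-element sets of consecutive core vertices of P that contain at least one element of B. Then |X ∩ B| ≤ |F'| + t − 1 (with the convention that if X is infinite the inequality is between cardinals/extended naturals). -/
/-!
Work with indices instead of vertices. An index `i` of a core vertex in `B` either starts a
full block `v i, …, v (i + t - 1)`, which then meets `B` in `v i`, or it is one of the last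
`t - 1` indices. Since the core vertices are distinct, a block determines its starting index,
so the first kind of index is counted by the blocks meeting `B`.
-/

open Set

lemma image_Ico_injOn {α : Type*} [DecidableEq α] {v : ℕ → α} {s : Set ℕ} {t : ℕ}
    (hv : InjOn v s) (ht : 0 < t) :
    InjOn (fun i ↦ (Finset.Ico i (i + t)).image v) {i | ↑(Finset.Ico i (i + t)) ⊆ s} := by
  have start_le {i j : ℕ} (hi : ↑(Finset.Ico i (i + t)) ⊆ s) (hj : ↑(Finset.Ico j (j + t)) ⊆ s)
      (h : (Finset.Ico i (i + t)).image v = (Finset.Ico j (j + t)).image v) : j ≤ i := by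
    have hvi : v i ∈ (Finset.Ico j (j + t)).image v :=
      h ▸ Finset.mem_image_of_mem v (Finset.left_mem_Ico.2 (by omega))
    obtain ⟨k, hk, hki⟩ := Finset.mem_image.1 hvi
    have hik : k = i := hv (hj hk) (hi (Finset.left_mem_Ico.2 (by omega))) hki
    exact hik ▸ (Finset.mem_Ico.1 hk).1
  intro i hi j hj h
  exact le_antisymm (start_le hj hi h.symm) (start_le hi hj h)

lemma encard_setOf_lt_and_lt_add_le (N : ℕ∞) (t : ℕ) :
    {i : ℕ | (i : ℕ∞) < N ∧ N < ((i + t : ℕ) : ℕ∞)}.encard ≤ ((t - 1 : ℕ) : ℕ∞) := by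
  cases N with
  | top => simp
  | coe n =>
    calc {i : ℕ | (i : ℕ∞) < n ∧ (n : ℕ∞) < ((i + t : ℕ) : ℕ∞)}.encard
        ≤ (↑(Finset.Ico (n + 1 - t) n) : Set ℕ).encard := by
          refine encard_le_encard fun i ⟨hin, hni⟩ ↦ ?_
          norm_cast at hin hni
          simp only [Finset.coe_Ico, mem_Ico]
          omega
      _ = ((n - (n + 1 - t) : ℕ) : ℕ∞) := by rw [encard_coe_eq_coe_finsetCard, Nat.card_Ico]
      _ ≤ ((t - 1 : ℕ) : ℕ∞) := by exact_mod_cast (by omega : n - (n + 1 - t) ≤ t - 1)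

/-- Counting fact (3): for a `t`-tight Berge-path whose core vertex sequence is
`v 0, v 1, …` (of length `N ∈ ℕ∞`, the vertices distinct) and a set `B ⊆ ℕ`,
letting `F'` be the collection of sets of `t` consecutive core vertices
containing at least one element of `B`, we have `|X ∩ B| ≤ |F'| + t - 1`
(as extended naturals). -/
theorem core_meets_block_bound (t : ℕ) (ht : 2 ≤ t) (N : ℕ∞) (v : ℕ → ℕ)
    (hinj : ∀ i j : ℕ, (i : ℕ∞) < N → (j : ℕ∞) < N → v i = v j → i = j)
    (B : Set ℕ) :
    ({x | ∃ i : ℕ, (i : ℕ∞) < N ∧ v i = x} ∩ B).encard ≤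
      {f : Finset ℕ | ∃ i : ℕ, ((i + t : ℕ) : ℕ∞) ≤ N ∧
        f = Finset.image v (Finset.Ico i (i + t)) ∧ ∃ x ∈ f, x ∈ B}.encard
        + ((t - 1 : ℕ) : ℕ∞) := by
  set blocksMeetingB := {f : Finset ℕ | ∃ i : ℕ, ((i + t : ℕ) : ℕ∞) ≤ N ∧
    f = Finset.image v (Finset.Ico i (i + t)) ∧ ∃ x ∈ f, x ∈ B}
  set starts := {i : ℕ | ((i + t : ℕ) : ℕ∞) ≤ N ∧ v i ∈ B}
  set tail := {i : ℕ | (i : ℕ∞) < N ∧ N < ((i + t : ℕ) : ℕ∞)}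
  have block_subset_core {i : ℕ} (hi : ((i + t : ℕ) : ℕ∞) ≤ N) :
      ↑(Finset.Ico i (i + t)) ⊆ {j : ℕ | (j : ℕ∞) < N} :=
    fun j hj ↦ (Nat.cast_lt.2 (Finset.mem_Ico.1 hj).2).trans_le hi
  have hstarts : starts.encard ≤ blocksMeetingB.encard := by
    refine encard_le_encard_of_injOn (f := fun i ↦ (Finset.Ico i (i + t)).image v)
      (fun i ⟨hiN, hiB⟩ ↦ ⟨i, hiN, rfl, v i, ?_, hiB⟩)
      ((image_Ico_injOn (fun i hi j hj ↦ hinj i j hi hj) (by omega)).mono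
        fun i hi ↦ block_subset_core hi.1)
    exact Finset.mem_image_of_mem v (Finset.left_mem_Ico.2 (by omega))
  calc _ ≤ (v '' (starts ∪ tail)).encard := by
        refine encard_le_encard ?_
        rintro _ ⟨⟨i, hiN, rfl⟩, hiB⟩
        by_cases hit : ((i + t : ℕ) : ℕ∞) ≤ N
        · exact ⟨i, .inl ⟨hit, hiB⟩, rfl⟩
        · exact ⟨i, .inr ⟨hiN, not_le.1 hit⟩, rfl⟩
    _ ≤ starts.encard + tail.encard := (encard_image_le _ _).trans (encard_union_le _ _)
    _ ≤ _ := add_le_add hstarts (encard_setOf_lt_and_lt_add_le N t)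
end

section
/- For all k ≥ 2, s ≥ 1 and every colouring of the k-sets of ℕ with r = s colours (the case t = k), ℕ can be partitioned into the cores of at most s monochromatic tight paths of distinct colours. -/
/-- A monochromatic `k`-uniform tight path of colour `c` (a single vertex, or
finite of length ≥ 1, or one-way infinite) in the complete `k`-graph on `ℕ`
coloured by `φ`: a sequence of distinct vertices `v 0, v 1, …` (of length
`N ∈ ℕ∞`) such that every `k` consecutive vertices form an edge of colour `c`.
The core `X` is the vertex set. -/
def IsMonoTightPath (k : ℕ) {r : ℕ} (φ : Finset ℕ → Fin r) (c : Fin r)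
    (X : Set ℕ) : Prop :=
  ∃ (N : ℕ∞) (v : ℕ → ℕ),
    (N = 1 ∨ (k : ℕ∞) ≤ N) ∧
    (∀ i j : ℕ, (i : ℕ∞) < N → (j : ℕ∞) < N → v i = v j → i = j) ∧
    X = {x | ∃ i : ℕ, (i : ℕ∞) < N ∧ v i = x} ∧
    ∀ i : ℕ, ((i + k : ℕ) : ℕ∞) ≤ N →
      φ (Finset.image v (Finset.Ico i (i + k))) = c

/-!
Fix a non-principal ultrafilter `U` on `ℕ`. Since there are finitely many colours, every
colouring of a set of vertices has a `U`-limit colour, and iterating gives the colour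
`limColour ℓ A` that `A` receives when completed by `ℓ` generic vertices. For each colour `c`
we grow a finite tight path of colour `c` whose last windows, completed generically, still
have colour `c`. To absorb an uncovered vertex `x`, let `c = limColour (k - 1) {x}`, place `x`
at distance `k - 1` beyond the end of the `c`-path and fill the `k - 1` gaps one at a time by
generic vertices avoiding all used ones: each window through a gap keeps its limit colour `c`.
The paths only grow, and their unions partition `ℕ`.
-/

open Filter Finset Function

theorem Ultrafilter.exists_eventually_eq {α β : Type*} [Finite β] (U : Ultrafilter α)
    (f : α → β) : ∃ b, ∀ᶠ a in U, f a = b := by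
  obtain ⟨b, hb⟩ := (U.map f).eq_pure_of_finite
  have hb' : ({b} : Set β) ∈ U.map f := hb ▸ Ultrafilter.mem_pure.2 rfl
  exact ⟨b, Ultrafilter.mem_map.1 hb'⟩

theorem Pairwise.disjoint_update {ι α : Type*} [DecidableEq ι] {f : ι → Set α}
    (h : Pairwise (Disjoint on f)) {i : ι} {A : Set α} (hA : ∀ j ≠ i, Disjoint A (f j)) :
    Pairwise (Disjoint on update f i A) := by
  intro a b hab
  rcases eq_or_ne a i with rfl | ha
  · simpa [onFun, hab.symm] using hA b hab.symm
  rcases eq_or_ne b i with rfl | hb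
  · simpa [onFun, ha] using (hA a ha).symm
  simpa [onFun, ha, hb] using h hab

namespace TightPath

theorem exists_eq_of_agree {n : ℕ → ℕ} {v : ℕ → ℕ → ℕ}
    (h : ∀ t t', t ≤ t' → ∀ i < n t, v t' i = v t i) :
    ∃ V : ℕ → ℕ, ∀ t, ∀ i < n t, v t i = V i := by
  classical
  refine ⟨fun i => if hi : ∃ t, i < n t then v (Nat.find hi) i else 0, fun t i hi => ?_⟩
  have hi' : ∃ t, i < n t := ⟨t, hi⟩
  dsimp only
  rw [dif_pos hi']
  exact h _ _ (Nat.find_min' hi' hi) i (Nat.find_spec hi')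

theorem isMonoTightPath_iUnion_image {s k : ℕ} {φ : Finset ℕ → Fin s} {c : Fin s}
    (hk : 0 < k) {n : ℕ → ℕ} (hn : Monotone n) {V : ℕ → ℕ}
    (hinj : ∀ t, Set.InjOn V (Set.Iio (n t)))
    (htight : ∀ t p, p + k ≤ n t → φ ((Ico p (p + k)).image V) = c)
    (hlen : ∀ t, n t = 0 ∨ k ≤ n t) :
    ⋃ t, V '' Set.Iio (n t) = ∅ ∨ IsMonoTightPath k φ c (⋃ t, V '' Set.Iio (n t)) := by
  set N : ℕ∞ := ⨆ t, (n t : ℕ∞)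
  have hlt : ∀ i : ℕ, (i : ℕ∞) < N ↔ ∃ t, i < n t := by simp [N, lt_iSup_iff]
  have hX : ⋃ t, V '' Set.Iio (n t) = {x | ∃ i : ℕ, (i : ℕ∞) < N ∧ V i = x} := by
    ext x; simp only [Set.mem_iUnion, Set.mem_image, Set.mem_Iio, hlt]; grind
  rw [hX]
  by_cases h0 : ∀ t, n t = 0
  · left; ext x; simp [hlt, h0]
  obtain ⟨t₀, ht₀⟩ := not_forall.1 h0
  right
  refine ⟨N, V, Or.inr (le_iSup_of_le t₀ (mod_cast (hlen t₀).resolve_left ht₀)),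
    fun i j hi hj hij => ?_, rfl, fun p hp => ?_⟩
  · obtain ⟨t, hi⟩ := (hlt i).1 hi
    obtain ⟨t', hj⟩ := (hlt j).1 hj
    exact hinj (max t t') (hi.trans_le (hn (le_max_left t t')))
      (hj.trans_le (hn (le_max_right t t'))) hij
  · obtain ⟨t, ht⟩ := (hlt (p + k - 1)).1 (ENat.natCast_add_one_le_iff.1 (by
      rwa [← Nat.cast_add_one, Nat.sub_add_cancel (by omega)]))
    exact htight t p (by omega)

variable {s : ℕ} (k : ℕ) (φ : Finset ℕ → Fin s) (U : Ultrafilter ℕ)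

/-- The colour that `A` receives once it is completed by `ℓ` further `U`-generic vertices. -/
noncomputable def limColour : ℕ → Finset ℕ → Fin s
  | 0, A => φ A
  | ℓ + 1, A => (U.exists_eventually_eq fun y => limColour ℓ (insert y A)).choose

theorem eventually_limColour_insert (ℓ : ℕ) (A : Finset ℕ) :
    ∀ᶠ y in U, limColour φ U ℓ (insert y A) = limColour φ U (ℓ + 1) A :=
  (U.exists_eventually_eq fun y => limColour φ U ℓ (insert y A)).choose_spec

/-- The positions `S` carry the distinct vertices `v`, and every window of `k` consecutive
positions starting at or before the last filled one gets colour `c` once its empty positions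
are filled by `U`-generic vertices. -/
def Extendable (c : Fin s) (S : Finset ℕ) (v : ℕ → ℕ) : Prop :=
  Set.InjOn v S ∧ ∀ p, (∃ r ∈ S, p ≤ r) →
    limColour φ U (k - #(S ∩ Ico p (p + k))) ((S ∩ Ico p (p + k)).image v) = c

variable {k φ U}

theorem extendable_range_zero (c : Fin s) (v : ℕ → ℕ) : Extendable k φ U c (range 0) v :=
  ⟨by simp, by simp⟩

theorem Extendable.apply_image_Ico {c : Fin s} {n : ℕ} {v : ℕ → ℕ}
    (h : Extendable k φ U c (range n) v) (hk : 0 < k) {p : ℕ} (hp : p + k ≤ n) :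
    φ ((Ico p (p + k)).image v) = c := by
  have hwin : range n ∩ Ico p (p + k) = Ico p (p + k) :=
    inter_eq_right.2 fun i hi => mem_range.2 (by grind)
  have := h.2 p ⟨p, mem_range.2 (by omega), le_rfl⟩
  rwa [hwin, Nat.card_Ico, Nat.add_sub_cancel_left, Nat.sub_self] at this

theorem Extendable.eventually_insert (hU : (U : Filter ℕ) ≤ cofinite) {c : Fin s}
    {S : Finset ℕ} {v : ℕ → ℕ} (h : Extendable k φ U c S v) {q : ℕ} (hq : q ∉ S)
    (hqr : ∃ r ∈ S, q ≤ r) :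
    ∀ᶠ y in U, Extendable k φ U c (insert q S) (update v q y) := by
  obtain ⟨r₀, hr₀, hqr₀⟩ := hqr
  set W : ℕ → Finset ℕ := fun p => S ∩ Ico p (p + k)
  have hfresh : ∀ᶠ y in U, y ∉ v '' S := hU ((S.finite_toSet.image v).compl_mem_cofinite)
  have hgen : ∀ᶠ y in U, ∀ p ∈ range (q + 1),
      limColour φ U (k - #(W p) - 1) (insert y ((W p).image v)) =
        limColour φ U (k - #(W p) - 1 + 1) ((W p).image v) :=
    (eventually_all_finset _).2 fun p _ => eventually_limColour_insert φ U _ _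
  filter_upwards [hfresh, hgen] with y hy hgen
  have hvS : Set.EqOn (update v q y) v S := fun i hi =>
    update_of_ne (ne_of_mem_of_not_mem hi hq) _ _
  refine ⟨?_, fun p hp => ?_⟩
  · rw [coe_insert, Set.injOn_insert (mod_cast hq), update_self, Set.image_congr hvS]
    exact ⟨h.1.congr hvS.symm, hy⟩
  by_cases hqp : q ∈ Ico p (p + k)
  · have hWq : q ∉ W p := fun h' => hq (mem_inter.1 h').1
    have hWk : #(W p) < k := by
      have := card_le_card (insert_subset hqp inter_subset_right : insert q (W p) ⊆ _)
      rw [card_insert_of_notMem hWq, Nat.card_Ico] at this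
      omega
    rw [insert_inter_of_mem hqp, card_insert_of_notMem hWq, image_insert, update_self,
      image_congr (hvS.mono inter_subset_left), Nat.sub_add_eq,
      hgen p (mem_range.2 (by grind)), Nat.sub_add_cancel (by omega)]
    exact h.2 p ⟨r₀, hr₀, (mem_Ico.1 hqp).1.trans hqr₀⟩
  · rw [insert_inter_of_notMem hqp, image_congr (hvS.mono inter_subset_left)]
    obtain ⟨r, hr, hpr⟩ := hp
    rcases mem_insert.1 hr with rfl | hr
    · exact h.2 p ⟨r₀, hr₀, hpr.trans hqr₀⟩
    · exact h.2 p ⟨r, hr, hpr⟩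

theorem Extendable.exists_fill (hU : (U : Filter ℕ) ≤ cofinite) {c : Fin s} {S : Finset ℕ}
    {v : ℕ → ℕ} (h : Extendable k φ U c S v) {F : Set ℕ} (hF : F.Finite) (T : Finset ℕ)
    (hST : Disjoint S T) (hT : ∀ q ∈ T, ∃ r ∈ S, q ≤ r) :
    ∃ w, Extendable k φ U c (S ∪ T) w ∧ Set.EqOn w v S ∧ ∀ i ∈ T, w i ∉ F := by
  induction T using Finset.induction_on with
  | empty => exact ⟨v, by simpa using h, Set.eqOn_refl _ _, by simp⟩
  | insert q T hqT ih =>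
    obtain ⟨w, hw, hwv, hwF⟩ :=
      ih (disjoint_insert_right.1 hST).2 fun i hi => hT i (mem_insert_of_mem hi)
    have hqS : q ∉ S ∪ T := by
      simpa [hqT] using (disjoint_insert_right.1 hST).1
    obtain ⟨r, hr, hqr⟩ := hT q (mem_insert_self q T)
    obtain ⟨y, hy, hyF⟩ := ((hw.eventually_insert hU hqS ⟨r, mem_union_left T hr, hqr⟩).and
      (hU hF.compl_mem_cofinite)).exists
    refine ⟨update w q y, by rwa [union_insert], fun i hi => ?_, fun i hi => ?_⟩
    · rw [update_of_ne (by rintro rfl; exact hqS (mem_union_left T hi))]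
      exact hwv hi
    · rcases mem_insert.1 hi with rfl | hiT
      · rwa [update_self]
      · rw [update_of_ne (by rintro rfl; exact hqT hiT)]
        exact hwF i hiT

theorem Extendable.insert_add_sub_one (hk : 0 < k) {c : Fin s} {n : ℕ} {v : ℕ → ℕ}
    (h : Extendable k φ U c (range n) v) {x : ℕ} (hx : x ∉ v '' Set.Iio n)
    (hxc : limColour φ U (k - 1) {x} = c) :
    Extendable k φ U c (insert (n + k - 1) (range n)) (update v (n + k - 1) x) := by
  have hvS : Set.EqOn (update v (n + k - 1) x) v (range n) := fun i hi =>
    update_of_ne (by simp at hi; omega) _ _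
  refine ⟨?_, fun p hp => ?_⟩
  · rw [coe_insert, Set.injOn_insert (by simp; omega), update_self, Set.image_congr hvS]
    exact ⟨h.1.congr hvS.symm, by rwa [coe_range]⟩
  rcases lt_or_ge p n with hpn | hpn
  · rw [insert_inter_of_notMem (by simp; omega), image_congr (hvS.mono inter_subset_left)]
    exact h.2 p ⟨p, mem_range.2 hpn, le_rfl⟩
  · have hwin : insert (n + k - 1) (range n) ∩ Ico p (p + k) = {n + k - 1} := by
      obtain ⟨r, hr, hpr⟩ := hp
      ext i; simp at hr ⊢; omega
    rwa [hwin, card_singleton, image_singleton, update_self]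

theorem Extendable.exists_absorb (hU : (U : Filter ℕ) ≤ cofinite) (hk : 0 < k) {c : Fin s}
    {n : ℕ} {v : ℕ → ℕ} (h : Extendable k φ U c (range n) v) {F : Set ℕ} (hF : F.Finite)
    (hvF : v '' Set.Iio n ⊆ F) {x : ℕ} (hxF : x ∉ F) (hxc : limColour φ U (k - 1) {x} = c) :
    ∃ w, Extendable k φ U c (range (n + k)) w ∧ (∀ i < n, w i = v i) ∧
      w (n + k - 1) = x ∧ ∀ i ∈ Ico n (n + k), w i ∉ F := by
  have hx := h.insert_add_sub_one hk (fun hx => hxF (hvF hx)) hxc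
  obtain ⟨w, hw, hwv, hwF⟩ := hx.exists_fill hU hF (Ico n (n + k - 1))
    (disjoint_left.2 fun i hi hi' => by simp at hi hi'; omega)
    fun q hq => ⟨n + k - 1, mem_insert_self _ _, by simp at hq; omega⟩
  have hwx : w (n + k - 1) = x := by rw [hwv (mem_insert_self _ _), update_self]
  have hrange : insert (n + k - 1) (range n) ∪ Ico n (n + k - 1) = range (n + k) := by
    ext i; simp; omega
  refine ⟨w, hrange ▸ hw, fun i hi => ?_, hwx, fun i hi => ?_⟩
  · rw [hwv (mem_insert_of_mem (mem_range.2 hi)), update_of_ne (by omega)]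
  · rcases eq_or_ne i (n + k - 1) with rfl | hi'
    · rwa [hwx]
    · exact hwF i (by simp at hi ⊢; omega)

structure Paths (s : ℕ) where
  len : Fin s → ℕ
  vert : Fin s → ℕ → ℕ

namespace Paths

instance : Preorder (Paths s) where
  le P Q := ∀ c, P.len c ≤ Q.len c ∧ ∀ i < P.len c, Q.vert c i = P.vert c i
  le_refl P c := ⟨le_rfl, fun _ _ => rfl⟩
  le_trans P Q R hPQ hQR c :=
    ⟨(hPQ c).1.trans (hQR c).1, fun i hi =>
      ((hQR c).2 i (hi.trans_le (hPQ c).1)).trans ((hPQ c).2 i hi)⟩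

def core (P : Paths s) (c : Fin s) : Set ℕ := P.vert c '' Set.Iio (P.len c)

theorem core_mono {P Q : Paths s} (h : P ≤ Q) (c : Fin s) : P.core c ⊆ Q.core c := by
  rintro _ ⟨i, hi, rfl⟩
  exact ⟨i, lt_of_lt_of_le hi (h c).1, (h c).2 i hi⟩

variable (k φ U) in
def Admissible (P : Paths s) : Prop :=
  (∀ c, Extendable k φ U c (range (P.len c)) (P.vert c)) ∧
    (∀ c, P.len c = 0 ∨ k ≤ P.len c) ∧ Pairwise (Disjoint on P.core)

theorem admissible_empty : (⟨fun _ => 0, fun _ _ => 0⟩ : Paths s).Admissible k φ U :=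
  ⟨fun c => extendable_range_zero c _, fun _ => Or.inl rfl, fun _ _ _ => by simp [onFun, core]⟩

def set (P : Paths s) (c₀ : Fin s) (n : ℕ) (w : ℕ → ℕ) : Paths s :=
  ⟨update P.len c₀ n, update P.vert c₀ w⟩

theorem core_set (P : Paths s) (c₀ : Fin s) (n : ℕ) (w : ℕ → ℕ) :
    (P.set c₀ n w).core = update P.core c₀ (w '' Set.Iio n) := by
  funext c
  rcases eq_or_ne c c₀ with rfl | hc
  · simp [set, core]
  · simp [set, core, hc]

theorem le_set {P : Paths s} {c₀ : Fin s} {n : ℕ} {w : ℕ → ℕ} (hn : P.len c₀ ≤ n)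
    (hw : ∀ i < P.len c₀, w i = P.vert c₀ i) : P ≤ P.set c₀ n w := fun c => by
  rcases eq_or_ne c c₀ with rfl | hc
  · simpa [set] using ⟨hn, hw⟩
  · simp [set, hc]

theorem Admissible.set {P : Paths s} (hP : P.Admissible k φ U) {c₀ : Fin s} {n : ℕ}
    {w : ℕ → ℕ} (hw : Extendable k φ U c₀ (range n) w) (hn : n = 0 ∨ k ≤ n)
    (hdisj : ∀ c ≠ c₀, Disjoint (w '' Set.Iio n) (P.core c)) :
    (P.set c₀ n w).Admissible k φ U := by
  refine ⟨fun c => ?_, fun c => ?_, ?_⟩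
  · rcases eq_or_ne c c₀ with rfl | hc
    · simpa [Paths.set] using hw
    · simpa [Paths.set, hc] using hP.1 c
  · rcases eq_or_ne c c₀ with rfl | hc
    · simpa [Paths.set] using hn
    · simpa [Paths.set, hc] using hP.2.1 c
  · rw [core_set]
    exact hP.2.2.disjoint_update hdisj

theorem Admissible.exists_le_mem_core (hU : (U : Filter ℕ) ≤ cofinite) (hk : 0 < k)
    {P : Paths s} (hP : P.Admissible k φ U) (x : ℕ) :
    ∃ Q : Paths s, Q.Admissible k φ U ∧ P ≤ Q ∧ ∃ c, x ∈ Q.core c := by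
  by_cases hx : ∃ c, x ∈ P.core c
  · exact ⟨P, hP, le_rfl, hx⟩
  set c₀ := limColour φ U (k - 1) {x}
  set F := ⋃ c, P.core c
  have hF : F.Finite := Set.finite_iUnion fun c => (Set.finite_Iio _).image _
  obtain ⟨w, hw, hwv, hwx, hwF⟩ := (hP.1 c₀).exists_absorb hU hk hF
    (Set.subset_iUnion P.core c₀) (by simpa [F] using hx) rfl
  have hdisj : ∀ c ≠ c₀, Disjoint (w '' Set.Iio (P.len c₀ + k)) (P.core c) := by
    refine fun c hc => Set.disjoint_left.2 ?_
    rintro _ ⟨i, hi, rfl⟩ hic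
    rcases lt_or_ge i (P.len c₀) with hi' | hi'
    · exact Set.disjoint_left.1 (hP.2.2 hc.symm) ⟨i, hi', (hwv i hi').symm⟩ hic
    · exact hwF i (mem_Ico.2 ⟨hi', hi⟩) (Set.mem_iUnion_of_mem c hic)
  refine ⟨P.set c₀ (P.len c₀ + k) w, hP.set hw (Or.inr (by omega)) hdisj,
    le_set (by omega) hwv, c₀, ?_⟩
  rw [core_set, update_self]
  exact ⟨P.len c₀ + k - 1, by simp only [Set.mem_Iio]; omega, hwx⟩

theorem exists_monotone_admissible (hU : (U : Filter ℕ) ≤ cofinite) (hk : 0 < k) :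
    ∃ P : ℕ → Paths s, (∀ t, (P t).Admissible k φ U) ∧ Monotone P ∧
      ∀ x, ∃ c, x ∈ (P (x + 1)).core c := by
  choose! f hfA hfle hfx using fun (P : Paths s) (hP : P.Admissible k φ U) =>
    hP.exists_le_mem_core hU hk
  let P : ℕ → Paths s := fun t => Nat.rec ⟨fun _ => 0, fun _ _ => 0⟩ (fun t Q => f Q t) t
  have hP : ∀ t, (P t).Admissible k φ U := fun t => by
    induction t with
    | zero => exact admissible_empty
    | succ t ih => exact hfA _ ih t
  exact ⟨P, hP, monotone_nat_of_le_succ fun t => hfle _ (hP t) t, fun x => hfx _ (hP x) x⟩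

theorem isMonoTightPath_iUnion_core (hk : 0 < k) {P : ℕ → Paths s} (hP : Monotone P)
    (hPA : ∀ t, (P t).Admissible k φ U) (c : Fin s) :
    ⋃ t, (P t).core c = ∅ ∨ IsMonoTightPath k φ c (⋃ t, (P t).core c) := by
  obtain ⟨V, hV⟩ := exists_eq_of_agree fun t t' h => ((hP h) c).2
  have hcore : ∀ t, (P t).core c = V '' Set.Iio ((P t).len c) := fun t =>
    Set.image_congr fun i hi => hV t i hi
  simp only [hcore]
  refine isMonoTightPath_iUnion_image hk (fun t t' h => ((hP h) c).1) (fun t => ?_)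
    (fun t p hp => ?_) fun t => (hPA t).2.1 c
  · have := ((hPA t).1 c).1.congr fun i hi => hV t i (by simpa using hi)
    rwa [coe_range] at this
  · rw [← ((hPA t).1 c).apply_image_Ico hk hp]
    refine congrArg φ (image_congr fun i hi => (hV t i ?_).symm)
    simp only [coe_Ico, Set.mem_Ico] at hi
    omega

end Paths

end TightPath

theorem tight_path_partition_general (s k : ℕ) (hk : 2 ≤ k)
    (φ : Finset ℕ → Fin s) :
    ∃ (X : Fin s → Set ℕ) (c : Fin s → Fin s),
      Function.Injective c ∧
      (∀ i : Fin s, X i = ∅ ∨ IsMonoTightPath k φ (c i) (X i)) ∧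
      (∀ i j : Fin s, i ≠ j → Disjoint (X i) (X j)) ∧
      (⋃ i, X i) = Set.univ := by
  obtain ⟨U, hU⟩ : ∃ U : Ultrafilter ℕ, (U : Filter ℕ) ≤ cofinite :=
    ⟨Ultrafilter.of cofinite, Ultrafilter.of_le _⟩
  obtain ⟨P, hPA, hP, hcover⟩ :=
    TightPath.Paths.exists_monotone_admissible (φ := φ) hU (by omega : 0 < k)
  refine ⟨fun c => ⋃ t, (P t).core c, id, injective_id,
    TightPath.Paths.isMonoTightPath_iUnion_core (by omega) hP hPA, fun c c' hcc' => ?_, ?_⟩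
  · refine Set.disjoint_iUnion_left.2 fun t => Set.disjoint_iUnion_right.2 fun t' => ?_
    exact ((hPA (max t t')).2.2 hcc').mono
      (TightPath.Paths.core_mono (hP (le_max_left t t')) c)
      (TightPath.Paths.core_mono (hP (le_max_right t t')) c')
  · refine Set.eq_univ_of_forall fun x => ?_
    obtain ⟨c, hc⟩ := hcover x
    exact Set.mem_iUnion.2 ⟨c, Set.mem_iUnion.2 ⟨x + 1, hc⟩⟩

/-- Elekes–Soukup–Soukup–Szentmiklóssy: for every `s`-colouring of the `k`-sets
of `ℕ`, the vertices can be partitioned into the cores of at most `s`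
monochromatic tight paths of pairwise distinct colours. -/
theorem tight_path_partition (s k : ℕ) (hk : 2 ≤ k) (hs : 1 ≤ s)
    (φ : Finset ℕ → Fin s) :
    ∃ (X : Fin s → Set ℕ) (c : Fin s → Fin s),
      Function.Injective c ∧
      (∀ i : Fin s, X i = ∅ ∨ IsMonoTightPath k φ (c i) (X i)) ∧
      (∀ i j : Fin s, i ≠ j → Disjoint (X i) (X j)) ∧
      (⋃ i, X i) = Set.univ :=
  tight_path_partition_general s k hk φ
end

section
/- For every r ∈ ℕ and every colouring of the k-sets of ℕ with r colours, ℕ can be partitioned into the vertex sets of r monochromatic loose paths (finite or infinite) of pairwise distinct colours. -/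
open Filter

namespace LoosePathAux

noncomputable def U : Ultrafilter ℕ := Filter.hyperfilter ℕ

lemma cofinite_mem {s : Set ℕ} (hs : s.Finite) : sᶜ ∈ U :=
  Filter.compl_mem_hyperfilter_of_finite hs

lemma exists_color {r : ℕ} (g : ℕ → Fin r) : ∃ c, {w | g w = c} ∈ U := by
  have h := Ultrafilter.eq_pure_of_finite_mem (f := U.map g) (s := Set.univ)
    Set.finite_univ Filter.univ_mem
  obtain ⟨c, -, hc⟩ := h
  refine ⟨c, ?_⟩
  have : {c} ∈ U.map g := by rw [hc]; exact Filter.mem_pure.2 rfl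
  simpa [Ultrafilter.mem_map, Set.preimage, Set.mem_singleton_iff] using this

variable {r : ℕ} (k : ℕ) (φ : Finset ℕ → Fin r)

noncomputable def colAux : ℕ → Finset ℕ → Fin r
  | 0, s => φ s
  | (m+1), s => (exists_color (fun w => colAux m (insert w s))).choose

lemma colAux_spec (m : ℕ) (s : Finset ℕ) :
    {w | colAux φ m (insert w s) = colAux φ (m+1) s} ∈ U :=
  (exists_color (fun w => colAux φ m (insert w s))).choose_spec

noncomputable def col (s : Finset ℕ) : Fin r := colAux φ (k - s.card) s

lemma col_eq_of_card (s : Finset ℕ) (h : s.card = k) : col k φ s = φ s := by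
  simp [col, h, colAux]

lemma col_spec (s : Finset ℕ) (h : s.card < k) :
    {w | w ∉ s ∧ col k φ (insert w s) = col k φ s} ∈ U := by
  have h1 : {w | w ∉ (s : Set ℕ)} ∈ U := cofinite_mem s.finite_toSet
  have h2 := colAux_spec φ (k - s.card - 1) s
  have hm : k - s.card - 1 + 1 = k - s.card := by omega
  rw [hm] at h2
  have := Filter.inter_mem h1 h2
  refine Filter.mem_of_superset this ?_
  rintro w ⟨hw1, hw2⟩
  refine ⟨hw1, ?_⟩
  have hc : (insert w s).card = s.card + 1 := Finset.card_insert_of_notMem hw1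
  unfold col
  rw [hc]
  have : k - (s.card + 1) = k - s.card - 1 := by omega
  rw [this]
  exact hw2

lemma Uset_inter_avoid {S : Set ℕ} (hS : S ∈ U) (F : Finset ℕ) :
    ∃ w ∈ S, w ∉ F := by
  have := Filter.inter_mem hS (cofinite_mem F.finite_toSet)
  rcases Filter.nonempty_of_mem this with ⟨w, hw1, hw2⟩
  exact ⟨w, hw1, by simpa using hw2⟩

end LoosePathAux

namespace LoosePathAux

variable {r : ℕ} (k : ℕ) (φ : Finset ℕ → Fin r)

lemma build_arm (j : ℕ) (hj : j + 1 ≤ k) (x : ℕ) (c : Fin r) (F : Finset ℕ)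
    (hx : col k φ {x} = c) :
    ∃ A : List ℕ, A.length = j ∧ (x :: A).Nodup ∧ (∀ y ∈ A, y ∉ F) ∧
      col k φ (x :: A).toFinset = c := by
  induction j with
  | zero => exact ⟨[], rfl, by simp, by simp, by simpa using hx⟩
  | succ j ih =>
      obtain ⟨A, hlen, hnd, hF, hcol⟩ := ih (by omega)
      have hcard : (x :: A).toFinset.card = j + 1 := by
        rw [List.toFinset_card_of_nodup hnd]; simp [hlen]
      have hspec := col_spec k φ (x :: A).toFinset (by omega)
      rw [hcol] at hspec
      obtain ⟨a, ⟨ha1, ha2⟩, ha3⟩ := Uset_inter_avoid hspec F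
      refine ⟨A ++ [a], by simp [hlen], ?_, ?_, ?_⟩
      · have : a ∉ (x :: A) := by simpa using ha1
        rw [show x :: (A ++ [a]) = (x :: A) ++ [a] by simp]
        rw [List.nodup_append]
        exact ⟨hnd, List.nodup_singleton a, fun y hy z hz hyz => this (by simp at hz; subst hz; exact hyz ▸ hy)⟩
      · intro y hy
        rcases List.mem_append.1 hy with h | h
        · exact hF y h
        · simp at h; subst h; exact ha3
      · have : (x :: (A ++ [a])).toFinset = insert a (x :: A).toFinset := by
          ext z; simp [or_comm, or_left_comm, or_assoc]
        rw [this]; exact ha2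

def GoodExt (c : Fin r) (x n : ℕ) (F : Finset ℕ) : Prop :=
  ∃ m : List ℕ, m.length = 2*k-2 ∧ (x :: m).Nodup ∧ (∀ y ∈ m, y ∉ F) ∧
    (∃ m₀, m = m₀ ++ [n]) ∧
    φ ((x::m).take k).toFinset = c ∧ φ (((x::m).drop (k-1)).take k).toFinset = c

lemma goodExt_holds (hk : 2 ≤ k) (c : Fin r) (x v : ℕ) (F : Finset ℕ)
    (hx : col k φ {x} = c) (hv : col k φ {v} = c) (hvF : v ∉ F) (hxv : x ≠ v) :
    GoodExt k φ c x v F := by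
  obtain ⟨A, hAlen, hAnd, hAF, hAcol⟩ :=
    build_arm k φ (k-2) (by omega) x c (insert v F) hx
  obtain ⟨B, hBlen, hBnd, hBF, hBcol⟩ :=
    build_arm k φ (k-2) (by omega) v c (insert x (F ∪ A.toFinset)) hv
  have hAcard : (x :: A).toFinset.card = k - 1 := by
    rw [List.toFinset_card_of_nodup hAnd]; simp [hAlen]; omega
  have hBcard : (v :: B).toFinset.card = k - 1 := by
    rw [List.toFinset_card_of_nodup hBnd]; simp [hBlen]; omega
  have hS1 := col_spec k φ (x :: A).toFinset (by omega)
  have hS2 := col_spec k φ (v :: B).toFinset (by omega)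
  rw [hAcol] at hS1; rw [hBcol] at hS2
  obtain ⟨w, hw, hwF⟩ := Uset_inter_avoid (Filter.inter_mem hS1 hS2)
    ((insert x (insert v F)) ∪ A.toFinset ∪ B.toFinset)
  obtain ⟨⟨hwA, hwA2⟩, hwB, hwB2⟩ := hw
  -- basic membership facts
  have hxA : x ∉ A := by have := hAnd; rw [List.nodup_cons] at this; exact this.1
  have hvB : v ∉ B := by have := hBnd; rw [List.nodup_cons] at this; exact this.1
  have hvA : v ∉ A := fun h => (hAF v h) (Finset.mem_insert_self _ _)
  have hxB : x ∉ B := fun h => (hBF x h) (Finset.mem_insert_self _ _)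
  have hAB : ∀ y ∈ A, y ∉ B := by
    intro y hyA hyB
    exact (hBF y hyB) (Finset.mem_insert_of_mem (Finset.mem_union_right _ (by simpa using hyA)))
  have hwx : w ≠ x := by intro h; subst h; exact hwF (by simp)
  have hwv : w ≠ v := by intro h; subst h; exact hwF (by simp)
  have hwAmem : w ∉ A := fun h => hwF (by simp [h])
  have hwBmem : w ∉ B := fun h => hwF (by simp [h])
  have hAnd' : A.Nodup := (List.nodup_cons.1 hAnd).2
  have hBnd' : B.Nodup := (List.nodup_cons.1 hBnd).2
  refine ⟨A ++ w :: (B ++ [v]), ?_, ?_, ?_, ⟨A ++ w :: B, by simp⟩, ?_, ?_⟩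
  · simp [hAlen, hBlen]; omega
  · -- Nodup of x :: A ++ w :: B ++ [v]
    rw [show x :: (A ++ w :: (B ++ [v])) = (x :: A) ++ (w :: (B ++ [v])) from by simp]
    refine List.Nodup.append hAnd ?_ ?_
    · rw [List.nodup_cons]
      constructor
      · intro h
        rcases List.mem_append.1 h with h | h
        · exact hwBmem h
        · simp at h; exact hwv h
      · refine List.Nodup.append hBnd' (List.nodup_singleton v) ?_
        intro y hy hy2
        simp at hy2; subst hy2; exact hvB hy
    · intro y hy hy2
      simp only [List.mem_cons, List.mem_append, List.mem_singleton,
        List.not_mem_nil, or_false] at hy2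
      rcases List.mem_cons.1 hy with h | h
      · subst h
        rcases hy2 with h2 | h2 | h2
        · exact hwx h2.symm
        · exact hxB h2
        · exact hxv h2
      · rcases hy2 with h2 | h2 | h2
        · exact hwAmem (h2 ▸ h)
        · exact hAB y h h2
        · exact hvA (h2 ▸ h)
  · intro y hy
    simp only [List.mem_append, List.mem_cons, List.mem_singleton,
      List.not_mem_nil, or_false] at hy
    rcases hy with h | h | h | h
    · exact fun hF' => hAF y h (Finset.mem_insert_of_mem hF')
    · subst h; exact fun hF' => hwF (by simp [hF'])
    · exact fun hF' => hBF y h (Finset.mem_insert_of_mem (Finset.mem_union_left _ hF'))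
    · subst h; exact hvF
  · -- first edge
    have htake : (x :: (A ++ w :: (B ++ [v]))).take k = (x :: A) ++ [w] := by
      rw [show x :: (A ++ w :: (B ++ [v])) = ((x :: A) ++ [w]) ++ (B ++ [v]) by simp]
      rw [List.take_append_of_le_length (by simp [hAlen]; omega)]
      rw [List.take_of_length_le (by simp [hAlen]; omega)]
    rw [htake]
    have : ((x :: A) ++ [w]).toFinset = insert w (x :: A).toFinset := by
      ext z; simp [or_comm, or_left_comm, or_assoc]
    rw [this, ← col_eq_of_card k φ _ (by
      rw [Finset.card_insert_of_notMem hwA, hAcard]; omega)]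
    exact hwA2
  · -- second edge
    have hdrop : (x :: (A ++ w :: (B ++ [v]))).drop (k-1) = w :: (B ++ [v]) := by
      rw [show x :: (A ++ w :: (B ++ [v])) = (x :: A) ++ (w :: (B ++ [v])) by simp]
      rw [List.drop_append_of_le_length (by simp [hAlen]; omega)]
      rw [List.drop_eq_nil_of_le (by simp [hAlen]; omega)]
      simp
    rw [hdrop]
    rw [List.take_of_length_le (by simp [hBlen]; omega)]
    have : (w :: (B ++ [v])).toFinset = insert w (v :: B).toFinset := by
      ext z; simp [or_comm, or_left_comm, or_assoc]
    rw [this, ← col_eq_of_card k φ _ (by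
      rw [Finset.card_insert_of_notMem hwB, hBcard]; omega)]
    exact hwB2

end LoosePathAux

namespace LoosePathAux

attribute [local instance] Classical.propDecidable

variable {r : ℕ} (k : ℕ) (φ : Finset ℕ → Fin r)

noncomputable def used (L : Fin r → List ℕ) : Finset ℕ :=
  Finset.univ.biUnion (fun c => (L c).toFinset)

lemma mem_used {L : Fin r → List ℕ} {n : ℕ} : n ∈ used L ↔ ∃ c, n ∈ L c := by
  simp [used]

noncomputable def extChoice (c : Fin r) (x n : ℕ) (F : Finset ℕ) : List ℕ :=
  if h : GoodExt k φ c x n F then h.choose else []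

noncomputable def step (n : ℕ) (L : Fin r → List ℕ) : Fin r → List ℕ :=
  if _ : ∃ c, n ∈ L c then L
  else
    Function.update L (col k φ {n})
      (if L (col k φ {n}) = [] then [n]
       else L (col k φ {n}) ++
         extChoice k φ (col k φ {n}) ((L (col k φ {n})).getLastD 0) n (used L))

noncomputable def states : ℕ → Fin r → List ℕ
  | 0 => fun _ => []
  | n+1 => step k φ n (states n)

structure Inv (n : ℕ) (L : Fin r → List ℕ) : Prop where
  len : ∀ c, L c = [] ∨ ∃ ℓ : ℕ, (L c).length = (k-1)*ℓ+1
  nodup : ∀ c, (L c).Nodup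
  disj : ∀ c c', c ≠ c' → ∀ y ∈ L c, y ∉ L c'
  mono : ∀ c i, i*(k-1)+k ≤ (L c).length →
    φ (((L c).drop (i*(k-1))).take k).toFinset = c
  endpt : ∀ c, L c ≠ [] → col k φ {(L c).getLastD 0} = c
  cov : ∀ m, m < n → ∃ c, m ∈ L c

lemma getLastD_mem {l : List ℕ} (h : l ≠ []) : l.getLastD 0 ∈ l := by
  rw [List.getLastD_eq_getLast? , List.getLast?_eq_getLast h]
  exact List.getLast_mem h

lemma drop_pred {l : List ℕ} (h : l ≠ []) :
    l = l.dropLast ++ (l.getLastD 0 :: []) := by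
  rw [List.getLastD_eq_getLast? , List.getLast?_eq_getLast h, Option.getD_some]
  exact (List.dropLast_append_getLast h).symm

lemma index_cases {i ℓ k : ℕ} (hk : 2 ≤ k)
    (h1 : (k-1)*ℓ+1 < i*(k-1)+k) (h2 : i*(k-1)+k ≤ (k-1)*(ℓ+2)+1) :
    i = ℓ ∨ i = ℓ+1 := by
  obtain ⟨d, rfl⟩ : ∃ d, k = d + 2 := ⟨k - 2, by omega⟩
  have hd : d + 2 - 1 = d + 1 := rfl
  rw [hd] at h1 h2
  have e1 : ℓ * (d+1) < (i+1) * (d+1) := by nlinarith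
  have e2 : i * (d+1) ≤ (ℓ+1) * (d+1) := by nlinarith
  have l1 : ℓ < i + 1 := lt_of_mul_lt_mul_right e1 (Nat.zero_le _)
  have l2 : i ≤ ℓ + 1 := Nat.le_of_mul_le_mul_right e2 (Nat.succ_pos d)
  omega

lemma inv_step (hk : 2 ≤ k) (n : ℕ) (L : Fin r → List ℕ) (h : Inv k φ n L) :
    Inv k φ (n+1) (step k φ n L) := by
  unfold step
  by_cases hc : ∃ c, n ∈ L c
  · rw [dif_pos hc]
    exact ⟨h.len, h.nodup, h.disj, h.mono, h.endpt, fun m hm => by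
      rcases Nat.lt_succ_iff_lt_or_eq.1 hm with hm' | hm'
      · exact h.cov m hm'
      · exact hm' ▸ hc⟩
  · rw [dif_neg hc]
    push_neg at hc
    set c₀ := col k φ {n} with hc₀
    by_cases he : L c₀ = []
    · -- start a new singleton path
      rw [if_pos he]
      constructor
      · intro c
        by_cases hcc : c = c₀
        · subst hcc; rw [Function.update_self]
          right; exact ⟨0, by simp⟩
        · rw [Function.update_of_ne hcc]; exact h.len c
      · intro c
        by_cases hcc : c = c₀
        · subst hcc; rw [Function.update_self]; exact List.nodup_singleton n
        · rw [Function.update_of_ne hcc]; exact h.nodup c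
      · intro c c' hne y hy
        by_cases hcc : c = c₀ <;> by_cases hcc' : c' = c₀
        · exact absurd (hcc.trans hcc'.symm) hne
        · subst hcc; rw [Function.update_self] at hy
          rw [Function.update_of_ne hcc']
          simp at hy; subst hy; exact hc c'
        · subst hcc'; rw [Function.update_self]
          rw [Function.update_of_ne hcc] at hy
          simp; intro hyn; subst hyn; exact hc c hy
        · rw [Function.update_of_ne hcc] at hy
          rw [Function.update_of_ne hcc']
          exact h.disj c c' hne y hy
      · intro c i hi
        by_cases hcc : c = c₀
        · subst hcc; rw [Function.update_self] at hi ⊢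
          exfalso
          have h1 : k ≤ i*(k-1)+k := Nat.le_add_left _ _
          have h2 : i*(k-1)+k ≤ 1 := by simpa using hi
          omega
        · rw [Function.update_of_ne hcc] at hi ⊢; exact h.mono c i hi
      · intro c hne
        by_cases hcc : c = c₀
        · subst hcc; rw [Function.update_self]
          simp [hc₀]
        · rw [Function.update_of_ne hcc] at hne ⊢; exact h.endpt c hne
      · intro m hm
        rcases Nat.lt_succ_iff_lt_or_eq.1 hm with hm' | hm'
        · obtain ⟨c, hc'⟩ := h.cov m hm'
          by_cases hcc : c = c₀
          · subst hcc; rw [he] at hc'; simp at hc'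
          · exact ⟨c, by rw [Function.update_of_ne hcc]; exact hc'⟩
        · subst hm'; exact ⟨c₀, by rw [Function.update_self]; simp⟩
    · -- extend the path of colour c₀ by two edges
      rw [if_neg he]
      set l := L c₀ with hl
      set x := l.getLastD 0 with hx
      have hxl : x ∈ l := getLastD_mem he
      have hnF : n ∉ used L := fun hn => hc _ (mem_used.1 hn).choose_spec
      have hxn : x ≠ n := fun hxn => hc c₀ (hxn ▸ hxl)
      have hGE : GoodExt k φ c₀ x n (used L) :=
        goodExt_holds k φ hk c₀ x n (used L) (h.endpt c₀ he) rfl hnF hxn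
      rw [show extChoice k φ c₀ x n (used L) = hGE.choose from dif_pos hGE]
      obtain ⟨hmlen, hmnd, hmF, ⟨m₀, hm₀⟩, he1, he2⟩ := hGE.choose_spec
      set m := hGE.choose with hmdef
      obtain ⟨ℓ, hℓ⟩ : ∃ ℓ : ℕ, l.length = (k-1)*ℓ+1 := (h.len c₀).resolve_left he
      have hml : ∀ y ∈ m, y ∉ l := fun y hy hyl => hmF y hy (mem_used.2 ⟨c₀, hyl⟩)
      have hnewlen : (l ++ m).length = (k-1)*(ℓ+2)+1 := by
        simp [hℓ, hmlen]; ring_nf; omega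
      have hdecomp : l ++ m = l.dropLast ++ (x :: m) := by
        rw [show l.dropLast ++ (x :: m) = (l.dropLast ++ (x :: [])) ++ m by simp]
        rw [hx, ← drop_pred (l := l) he]
      have hdllen : l.dropLast.length = (k-1)*ℓ := by
        simp [hℓ]
      constructor
      · intro c
        by_cases hcc : c = c₀
        · subst hcc; rw [Function.update_self]
          right; exact ⟨ℓ+2, hnewlen⟩
        · rw [Function.update_of_ne hcc]; exact h.len c
      · intro c
        by_cases hcc : c = c₀
        · subst hcc; rw [Function.update_self]
          exact List.Nodup.append (h.nodup c₀) (List.nodup_cons.1 hmnd).2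
            (fun y hyl hym => hml y hym hyl)
        · rw [Function.update_of_ne hcc]; exact h.nodup c
      · intro c c' hne y hy
        by_cases hcc : c = c₀ <;> by_cases hcc' : c' = c₀
        · exact absurd (hcc.trans hcc'.symm) hne
        · subst hcc; rw [Function.update_self] at hy
          rw [Function.update_of_ne hcc']
          rcases List.mem_append.1 hy with hy' | hy'
          · exact h.disj c₀ c' hne y hy'
          · exact fun hyc' => hmF y hy' (mem_used.2 ⟨c', hyc'⟩)
        · subst hcc'; rw [Function.update_self]
          rw [Function.update_of_ne hcc] at hy
          intro hy2
          rcases List.mem_append.1 hy2 with hy' | hy'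
          · exact h.disj c c₀ hne y hy hy'
          · exact hmF y hy' (mem_used.2 ⟨c, hy⟩)
        · rw [Function.update_of_ne hcc] at hy
          rw [Function.update_of_ne hcc']
          exact h.disj c c' hne y hy
      · intro c i hi
        by_cases hcc : c = c₀
        · subst hcc; rw [Function.update_self] at hi ⊢
          rw [hnewlen] at hi
          by_cases hin : i*(k-1)+k ≤ l.length
          · rw [List.drop_append_of_le_length (by omega),
              List.take_append_of_le_length (by simp; omega)]
            exact h.mono c₀ i hin
          · rcases index_cases hk (by omega) hi with hi' | hi'
            · rw [hi', hdecomp]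
              rw [show ℓ*(k-1) = l.dropLast.length + 0 by rw [hdllen]; ring]
              rw [List.drop_length_add_append]
              simpa using he1
            · rw [hi', hdecomp]
              rw [show (ℓ+1)*(k-1) = l.dropLast.length + (k-1) by rw [hdllen]; ring]
              rw [List.drop_length_add_append]
              exact he2
        · rw [Function.update_of_ne hcc] at hi ⊢; exact h.mono c i hi
      · intro c hne
        by_cases hcc : c = c₀
        · subst hcc; rw [Function.update_self]
          rw [hm₀, show l ++ (m₀ ++ [n]) = (l ++ m₀) ++ [n] by simp,
            List.getLastD_concat]
        · rw [Function.update_of_ne hcc] at hne ⊢; exact h.endpt c hne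
      · intro m' hm'
        rcases Nat.lt_succ_iff_lt_or_eq.1 hm' with hm2 | hm2
        · obtain ⟨c, hcm⟩ := h.cov m' hm2
          by_cases hcc : c = c₀
          · subst hcc
            exact ⟨c₀, by rw [Function.update_self]; exact List.mem_append_left _ hcm⟩
          · exact ⟨c, by rw [Function.update_of_ne hcc]; exact hcm⟩
        · subst hm2
          refine ⟨c₀, ?_⟩
          rw [Function.update_self]
          exact List.mem_append_right _ (by rw [hm₀]; simp)

lemma inv_states (hk : 2 ≤ k) (n : ℕ) : Inv k φ n (states k φ n) := by
  induction n with
  | zero =>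
      have hz : ∀ c : Fin r, states k φ 0 c = [] := fun c => rfl
      refine ⟨fun c => Or.inl (hz c), fun c => (hz c) ▸ List.nodup_nil,
        fun c c' _ y hy => by rw [hz c] at hy; simp at hy,
        fun c i hi => ?_, fun c hne => absurd (hz c) hne, fun m hm => by omega⟩
      rw [hz c] at hi
      exfalso
      have h1 : k ≤ i*(k-1)+k := Nat.le_add_left _ _
      have h2 : i*(k-1)+k ≤ 0 := by simpa using hi
      omega
  | succ n ih => exact inv_step k φ hk n _ ih

lemma states_prefix (n : ℕ) (c : Fin r) :
    states k φ n c <+: states k φ (n+1) c := by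
  show states k φ n c <+: step k φ n (states k φ n) c
  unfold step
  by_cases hc : ∃ c', n ∈ states k φ n c'
  · rw [dif_pos hc]
  · rw [dif_neg hc]
    by_cases hcc : c = col k φ {n}
    · rw [hcc, Function.update_self]
      by_cases he : states k φ n (col k φ {n}) = []
      · rw [if_pos he, he]; exact List.nil_prefix
      · rw [if_neg he]; exact List.prefix_append _ _
    · rw [Function.update_of_ne hcc]

lemma states_prefix_le {a b : ℕ} (hab : a ≤ b) (c : Fin r) :
    states k φ a c <+: states k φ b c := by
  induction b with
  | zero => rw [Nat.le_zero.1 hab]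
  | succ b ih =>
      rcases Nat.lt_succ_iff_lt_or_eq.1 (Nat.lt_succ_of_le hab) with hb | hb
      · exact (ih (by omega)).trans (states_prefix k φ b c)
      · rw [hb]

end LoosePathAux

namespace LoosePathAux

attribute [local instance] Classical.propDecidable

variable {r : ℕ} (k : ℕ) (φ : Finset ℕ → Fin r)

lemma prefix_getD {l₁ l₂ : List ℕ} (h : l₁ <+: l₂) {i : ℕ} (hi : i < l₁.length) :
    l₁.getD i 0 = l₂.getD i 0 := by
  obtain ⟨t, rfl⟩ := h
  rw [List.getD_append _ _ _ _ hi]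

noncomputable def vfun (c : Fin r) (i : ℕ) : ℕ :=
  if h : ∃ n, i < (states k φ n c).length then (states k φ h.choose c).getD i 0
  else 0

lemma vfun_eq {c : Fin r} {i n : ℕ} (hn : i < (states k φ n c).length) :
    vfun k φ c i = (states k φ n c).getD i 0 := by
  have hex : ∃ n, i < (states k φ n c).length := ⟨n, hn⟩
  rw [vfun, dif_pos hex]
  rcases le_total hex.choose n with h | h
  · exact prefix_getD (states_prefix_le k φ h c) hex.choose_spec
  · exact (prefix_getD (states_prefix_le k φ h c) hn).symm

lemma image_eq {l : List ℕ} {a : ℕ} (h : a + k ≤ l.length) {f : ℕ → ℕ}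
    (hf : ∀ j, j < l.length → f j = l.getD j 0) :
    Finset.image f (Finset.Ico a (a+k)) = ((l.drop a).take k).toFinset := by
  ext z
  simp only [Finset.mem_image, Finset.mem_Ico, List.mem_toFinset]
  constructor
  · rintro ⟨j, ⟨hj1, hj2⟩, rfl⟩
    rw [hf j (by omega), List.getD_eq_getElem _ _ (by omega)]
    rw [List.mem_iff_getElem]
    refine ⟨j - a, by simp; omega, ?_⟩
    rw [List.getElem_take, List.getElem_drop]
    congr 1
    omega
  · intro hz
    rw [List.mem_iff_getElem] at hz
    obtain ⟨p, hp, hz⟩ := hz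
    simp only [List.length_take, List.length_drop] at hp
    refine ⟨a + p, ⟨by omega, by omega⟩, ?_⟩
    rw [hf (a+p) (by omega), List.getD_eq_getElem _ _ (by omega)]
    rw [List.getElem_take, List.getElem_drop] at hz
    exact hz

lemma mono_path_of (hk : 2 ≤ k) (c : Fin r) (N : ℕ∞)
    (hub : ∀ n : ℕ, ((states k φ n c).length : ℕ∞) ≤ N)
    (hatt : ∀ i : ℕ, (i : ℕ∞) < N → ∃ n, i < (states k φ n c).length)
    (hatt' : ∀ i : ℕ, (i : ℕ∞) ≤ N → ∃ n, i ≤ (states k φ n c).length) :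
    (∀ i j : ℕ, (i : ℕ∞) < N → (j : ℕ∞) < N → vfun k φ c i = vfun k φ c j → i = j) ∧
    {x | ∃ n, x ∈ states k φ n c} = {x | ∃ i : ℕ, (i : ℕ∞) < N ∧ vfun k φ c i = x} ∧
    ∀ i : ℕ, ((i * (k - 1) + k : ℕ) : ℕ∞) ≤ N →
      φ (Finset.image (vfun k φ c) (Finset.Ico (i * (k - 1)) (i * (k - 1) + k))) = c := by
  refine ⟨?_, ?_, ?_⟩
  · intro i j hi hj hij
    obtain ⟨ni, hni⟩ := hatt i hi
    obtain ⟨nj, hnj⟩ := hatt j hj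
    have hni' : i < (states k φ (max ni nj) c).length :=
      lt_of_lt_of_le hni (states_prefix_le k φ (le_max_left _ _) c).length_le
    have hnj' : j < (states k φ (max ni nj) c).length :=
      lt_of_lt_of_le hnj (states_prefix_le k φ (le_max_right _ _) c).length_le
    rw [vfun_eq k φ hni', vfun_eq k φ hnj'] at hij
    rw [List.getD_eq_getElem _ _ hni', List.getD_eq_getElem _ _ hnj'] at hij
    exact (((inv_states k φ hk (max ni nj)).nodup c).getElem_inj_iff).1 hij
  · ext x
    simp only [Set.mem_setOf_eq]
    constructor
    · rintro ⟨n, hx⟩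
      rw [List.mem_iff_getElem] at hx
      obtain ⟨i, hi, hx⟩ := hx
      refine ⟨i, ?_, ?_⟩
      · calc (i : ℕ∞) < ((states k φ n c).length : ℕ∞) := by exact_mod_cast hi
          _ ≤ N := hub n
      · rw [vfun_eq k φ hi, List.getD_eq_getElem _ _ hi]; exact hx
    · rintro ⟨i, hi, hx⟩
      obtain ⟨n, hn⟩ := hatt i hi
      refine ⟨n, ?_⟩
      rw [← hx, vfun_eq k φ hn, List.getD_eq_getElem _ _ hn]
      exact List.getElem_mem _
  · intro i hi
    obtain ⟨n, hn⟩ := hatt' (i * (k-1) + k) hi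
    rw [image_eq k hn (fun j hj => vfun_eq k φ hj)]
    exact (inv_states k φ hk n).mono c i hn

end LoosePathAux

/-- A monochromatic `k`-uniform loose path of colour `c` (empty, a single
vertex, finite of length `ℓ ≥ 1` on `(k-1)ℓ + 1` vertices, or one-way infinite)
in the complete `k`-graph on `ℕ` coloured by `φ`, with vertex set `X`:
the vertices are `v 0, v 1, …` (distinct, `N` of them where `N ∈ ℕ∞`), and for
each `i` the `k`-set `{v (i*(k-1)), …, v (i*(k-1)+k-1)}` is an edge of
colour `c`. -/
def IsMonoLoosePath (k : ℕ) {r : ℕ} (φ : Finset ℕ → Fin r) (c : Fin r)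
    (X : Set ℕ) : Prop :=
  X = ∅ ∨
  ∃ (N : ℕ∞) (v : ℕ → ℕ),
    (N = 1 ∨ N = ⊤ ∨ ∃ ℓ : ℕ, 1 ≤ ℓ ∧ N = ((k - 1) * ℓ + 1 : ℕ)) ∧
    (∀ i j : ℕ, (i : ℕ∞) < N → (j : ℕ∞) < N → v i = v j → i = j) ∧
    X = {x | ∃ i : ℕ, (i : ℕ∞) < N ∧ v i = x} ∧
    ∀ i : ℕ, ((i * (k - 1) + k : ℕ) : ℕ∞) ≤ N →
      φ (Finset.image v (Finset.Ico (i * (k - 1)) (i * (k - 1) + k))) = c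

open LoosePathAux in
/-- Gyárfás–Sárközy: for every `r`-colouring of the `k`-sets of `ℕ`, the
vertices can be partitioned into `r` monochromatic loose paths, one of each
colour. -/
theorem loose_path_partition (r k : ℕ) (hk : 2 ≤ k)
    (φ : Finset ℕ → Fin r) :
    ∃ X : Fin r → Set ℕ,
      (∀ i : Fin r, IsMonoLoosePath k φ i (X i)) ∧
      (∀ i j : Fin r, i ≠ j → Disjoint (X i) (X j)) ∧
      (⋃ i, X i) = Set.univ := by
  classical
  rcases Nat.eq_zero_or_pos r with hr | _
  · subst hr; exact (φ ∅).elim0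
  refine ⟨fun c => {x | ∃ n, x ∈ states k φ n c}, ?_, ?_, ?_⟩
  · intro c
    by_cases hemp : ∀ n, states k φ n c = []
    · left
      ext x
      simp only [Set.mem_setOf_eq, Set.mem_empty_iff_false, iff_false]
      rintro ⟨n, hx⟩
      rw [hemp n] at hx
      simp at hx
    · right
      push_neg at hemp
      obtain ⟨n₀, hn₀⟩ := hemp
      by_cases hB : ∃ B, ∀ n, (states k φ n c).length ≤ B
      · -- bounded: the path stabilises to a finite loose path
        have hbdd : BddAbove (Set.range (fun n => (states k φ n c).length)) := by
          obtain ⟨B, hB⟩ := hB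
          exact ⟨B, by rintro _ ⟨n, rfl⟩; exact hB n⟩
        have hne : (Set.range (fun n => (states k φ n c).length)).Nonempty :=
          ⟨_, Set.mem_range_self 0⟩
        set M := sSup (Set.range (fun n => (states k φ n c).length)) with hM
        have hM1 : ∀ n, (states k φ n c).length ≤ M :=
          fun n => le_csSup hbdd (Set.mem_range_self n)
        obtain ⟨n₁, hn₁⟩ : ∃ n, (states k φ n c).length = M := Nat.sSup_mem hne hbdd
        have hM0 : 0 < M := lt_of_lt_of_le (List.length_pos_iff.2 hn₀) (hM1 n₀)
        have h3 := mono_path_of k φ hk c (M : ℕ∞)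
          (fun n => by exact_mod_cast hM1 n)
          (fun i hi => ⟨n₁, by rw [hn₁]; exact_mod_cast hi⟩)
          (fun i hi => ⟨n₁, by rw [hn₁]; exact_mod_cast hi⟩)
        refine ⟨(M : ℕ∞), vfun k φ c, ?_, h3.1, h3.2.1, h3.2.2⟩
        rcases (inv_states k φ hk n₁).len c with h | ⟨ℓ, hℓ⟩
        · rw [h] at hn₁; simp at hn₁; omega
        · have hMℓ : M = (k-1)*ℓ+1 := by rw [← hn₁, hℓ]
          rcases Nat.eq_zero_or_pos ℓ with h0 | h0
          · left
            subst h0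
            have : M = 1 := by omega
            rw [this]; norm_cast
          · right; right
            exact ⟨ℓ, h0, by exact_mod_cast congrArg (Nat.cast : ℕ → ℕ∞) hMℓ⟩
      · -- unbounded: infinite loose path
        push_neg at hB
        have h3 := mono_path_of k φ hk c ⊤ (fun _ => le_top)
          (fun i _ => hB i)
          (fun i _ => (hB i).imp (fun n hn => le_of_lt hn))
        exact ⟨⊤, vfun k φ c, Or.inr (Or.inl rfl), h3.1, h3.2.1, h3.2.2⟩
  · intro i j hij
    rw [Set.disjoint_left]
    rintro x ⟨n₁, h₁⟩ ⟨n₂, h₂⟩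
    have h₁' : x ∈ states k φ (max n₁ n₂) i :=
      (states_prefix_le k φ (le_max_left _ _) i).subset h₁
    have h₂' : x ∈ states k φ (max n₁ n₂) j :=
      (states_prefix_le k φ (le_max_right _ _) j).subset h₂
    exact (inv_states k φ hk (max n₁ n₂)).disj i j hij x h₁' h₂'
  · ext x
    simp only [Set.mem_iUnion, Set.mem_univ, iff_true]
    obtain ⟨c, hc⟩ := (inv_states k φ hk (x+1)).cov x (Nat.lt_succ_self x)
    exact ⟨c, x+1, hc⟩
end
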